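/- arXiv:2204.01683 — 6 statements merged into one kernel-verified Lean document; each statement's English description precedes it below -/
import Mathlib

section
/- For any Borel probability measure F on ℝ^q and any Borel function f ∈ L¹(F), the map A ↦ ∫_A f dF defines a finite signed Borel measure on ℝ^q; if additionally g : ℝ^q → ℝ is bounded, continuous, supported in the closure of an open box O = (l₁,u₁)×⋯×(l_q,u_q), sufficiently differentiable on O (all iterated mixed partials ∂^k g/∂x_{q−k+1}⋯∂x_q exist and extend continuously to the closure), and for q > 1 and each 2 ≤ k ≤ q the mixed partial ∂^{q−k+1}g/∂x_k⋯∂x_q vanishes at x_j = u_j for j < k, then ∫ f·g dF = (−1)^q ∫_{[l,u]} Ω_f(l,t) · ∂_t g(t) dt, where ∂_t g = ∂^q g/∂t₁⋯∂t_q and Ω_f(l,t) = ∫ ∏_{i=1}^q 𝟙{l_i ≤ x_i ≤ t_i} f(x) dF(x). -/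
open MeasureTheory Metric Set Filter Topology
open scoped ENNReal

/-- Partial derivative of `g` in coordinate `i`. -/
noncomputable def pd {q : ℕ} (i : Fin q) (g : (Fin q → ℝ) → ℝ) : (Fin q → ℝ) → ℝ :=
  fun x => deriv (fun t => g (Function.update x i t)) (x i)

/-- Iterated mixed partial `∂^{q-k} g / ∂x_{k+1} ⋯ ∂x_q` (0-based: coordinates `k, …, q-1`),
so `mp 0 g = ∂^q g / ∂x₁ ⋯ ∂x_q` and `mp q g = g`. -/
noncomputable def mp {q : ℕ} (k : ℕ) (g : (Fin q → ℝ) → ℝ) : (Fin q → ℝ) → ℝ :=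
  ((List.finRange q).drop k).foldr pd g

lemma mp_self {q : ℕ} (g : (Fin q → ℝ) → ℝ) : mp q g = g := by
  simp [mp, List.drop_eq_nil_of_le (le_of_eq (List.length_finRange (n := q)))]

lemma mp_succ {q : ℕ} (k : ℕ) (hk : k < q) (g : (Fin q → ℝ) → ℝ) :
    mp k g = pd ⟨k, hk⟩ (mp (k + 1) g) := by
  unfold mp
  rw [List.drop_eq_getElem_cons (by simpa using hk)]
  simp [List.foldr, List.getElem_finRange]

lemma g_zero_of_coord_eq {q : ℕ} {g : (Fin q → ℝ) → ℝ} {l u : Fin q → ℝ}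
    (hg_cont : Continuous g) (hg_supp : ∀ x, g x ≠ 0 → x ∈ Set.Icc l u)
    {x : Fin q → ℝ} {j : Fin q} (hx : x j = u j) : g x = 0 := by
  have hcu : Continuous (fun c : ℝ => Function.update x j c) := by
    refine continuous_pi fun i => ?_
    by_cases h : i = j
    · subst h
      simp only [Function.update_self]
      exact continuous_id
    · simp only [Function.update_of_ne h]
      exact continuous_const
  have h1 : Tendsto (fun c : ℝ => g (Function.update x j c)) (𝓝[>] (u j)) (𝓝 (g x)) := by
    have h0 : Tendsto (fun c : ℝ => Function.update x j c) (𝓝 (u j)) (𝓝 x) := by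
      have he : Function.update x j (u j) = x := by rw [← hx, Function.update_eq_self]
      have := hcu.tendsto (u j)
      rwa [he] at this
    exact (hg_cont.tendsto x).comp (h0.mono_left nhdsWithin_le_nhds)
  have h2 : ∀ᶠ c in 𝓝[>] (u j), g (Function.update x j c) = 0 := by
    filter_upwards [self_mem_nhdsWithin] with c hc
    by_contra h
    have h3 := (hg_supp _ h).2 j
    rw [Function.update_self] at h3
    exact absurd h3 (not_le.mpr hc)
  exact tendsto_nhds_unique (h1.congr' h2) tendsto_const_nhds

lemma van_aux {q : ℕ} {g : (Fin q → ℝ) → ℝ} {l u : Fin q → ℝ}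
    (hg_cont : Continuous g) (hg_supp : ∀ x, g x ≠ 0 → x ∈ Set.Icc l u)
    (hvan : ∀ k : Fin q, 1 ≤ (k : ℕ) → ∀ x : Fin q → ℝ,
        (∃ j : Fin q, (j : ℕ) < (k : ℕ) ∧ x j = u j) → mp (k : ℕ) g x = 0)
    (k : Fin q) (x : Fin q → ℝ) (hx : x k = u k) : mp ((k : ℕ) + 1) g x = 0 := by
  rcases eq_or_lt_of_le (Nat.succ_le_of_lt k.isLt) with h | h
  · have h' : (k : ℕ) + 1 = q := h
    rw [h', mp_self]
    exact g_zero_of_coord_eq hg_cont hg_supp hx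
  · exact hvan ⟨(k : ℕ) + 1, h⟩ (Nat.succ_le_succ (Nat.zero_le _)) x ⟨k, by simp, hx⟩

lemma slice_ftc {q : ℕ} {g : (Fin q → ℝ) → ℝ} {l u : Fin q → ℝ}
    (hg_cont : Continuous g) (hg_supp : ∀ x, g x ≠ 0 → x ∈ Set.Icc l u)
    (hdiff : ∀ k : Fin q, ∀ x ∈ Set.pi Set.univ (fun i => Set.Ioo (l i) (u i)),
        DifferentiableAt ℝ (fun t => mp ((k : ℕ) + 1) g (Function.update x k t)) (x k))
    (hcont : ∀ k : ℕ, k ≤ q → ContinuousOn (mp k g) (Set.Icc l u))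
    (hvan : ∀ k : Fin q, 1 ≤ (k : ℕ) → ∀ x : Fin q → ℝ,
        (∃ j : Fin q, (j : ℕ) < (k : ℕ) ∧ x j = u j) → mp (k : ℕ) g x = 0)
    (k : Fin q) (y : Fin q → ℝ) (hy : ∀ j, y j ∈ Set.Ioo (l j) (u j)) :
    ∫ s in (y k)..(u k), mp (k : ℕ) g (Function.update y k s)
      = - mp ((k : ℕ) + 1) g y := by
  have hk : (k : ℕ) < q := k.isLt
  have hmp : mp (k : ℕ) g = pd k (mp ((k : ℕ) + 1) g) := by
    rw [mp_succ (k : ℕ) hk g, Fin.eta]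
  have hab : y k ≤ u k := (hy k).2.le
  have hcu : Continuous (fun s : ℝ => Function.update y k s) := by
    refine continuous_pi fun i => ?_
    by_cases h : i = k
    · subst h; simp only [Function.update_self]; exact continuous_id
    · simp only [Function.update_of_ne h]; exact continuous_const
  have hmaps : ∀ s ∈ Set.Icc (y k) (u k), Function.update y k s ∈ Set.Icc l u := by
    intro s hs
    constructor <;> intro i <;> by_cases h : i = k
    · subst h; simpa using le_trans (hy i).1.le hs.1
    · simpa [Function.update_of_ne h] using (hy i).1.le
    · subst h; simpa using hs.2
    · simpa [Function.update_of_ne h] using (hy i).2.le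
  have hcontF : ContinuousOn (fun s => mp ((k : ℕ) + 1) g (Function.update y k s))
      (Set.Icc (y k) (u k)) :=
    (hcont ((k : ℕ) + 1) hk).comp hcu.continuousOn hmaps
  have hderiv : ∀ s ∈ Set.Ioo (y k) (u k),
      HasDerivAt (fun s => mp ((k : ℕ) + 1) g (Function.update y k s))
        (mp (k : ℕ) g (Function.update y k s)) s := by
    intro s hs
    have hmem : Function.update y k s ∈ Set.pi Set.univ (fun i => Set.Ioo (l i) (u i)) := by
      intro i _
      by_cases h : i = k
      · subst h
        simpa using ⟨lt_of_lt_of_le (hy i).1 hs.1.le |>.trans_le le_rfl, hs.2⟩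
      · simpa [Function.update_of_ne h] using hy i
    have da := hdiff k _ hmem
    simp only [Function.update_idem, Function.update_self] at da
    have h1 := da.hasDerivAt
    have h2 : deriv (fun t => mp ((k : ℕ) + 1) g (Function.update y k t)) s
        = mp (k : ℕ) g (Function.update y k s) := by
      rw [hmp]
      simp only [pd, Function.update_idem, Function.update_self]
    rwa [h2] at h1
  have hint : IntervalIntegrable (fun s => mp (k : ℕ) g (Function.update y k s))
      volume (y k) (u k) := by
    apply ContinuousOn.intervalIntegrable
    rw [Set.uIcc_of_le hab]
    exact (hcont (k : ℕ) hk.le).comp hcu.continuousOn hmaps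
  rw [intervalIntegral.integral_eq_sub_of_hasDerivAt_of_le hab hcontF hderiv hint]
  have hz : mp ((k : ℕ) + 1) g (Function.update y k (u k)) = 0 :=
    van_aux hg_cont hg_supp hvan k _ (by simp)
  rw [hz, Function.update_eq_self]
  ring

/-- Replace the first `k` coordinates of `t` by those of `x`. -/
def patch {q : ℕ} (k : ℕ) (x t : Fin q → ℝ) : Fin q → ℝ :=
  fun j => if (j : ℕ) < k then x j else t j

lemma patch_zero {q : ℕ} (x t : Fin q → ℝ) : patch 0 x t = t := by
  funext j; simp [patch]

lemma patch_all {q : ℕ} (x t : Fin q → ℝ) : patch q x t = x := by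
  funext j; simp [patch, j.isLt]

lemma continuous_patch {q : ℕ} (k : ℕ) (x : Fin q → ℝ) : Continuous (patch k x) := by
  refine continuous_pi fun j => ?_
  by_cases h : (j : ℕ) < k <;> simp only [patch, h, if_true, if_false]
  · exact continuous_const
  · exact continuous_apply j

lemma patch_mem_Icc {q : ℕ} {k : ℕ} {l u x t : Fin q → ℝ} (hx : x ∈ Set.Icc l u)
    (ht : t ∈ Set.Icc x u) : patch k x t ∈ Set.Icc l u := by
  constructor <;> intro j <;> by_cases h : (j : ℕ) < k <;>
    simp only [patch, h, if_true, if_false]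
  · exact hx.1 j
  · exact le_trans (hx.1 j) (ht.1 j)
  · exact hx.2 j
  · exact ht.2 j

lemma integrableOn_patch {q : ℕ} {g : (Fin q → ℝ) → ℝ} {l u : Fin q → ℝ}
    (hcont : ∀ k : ℕ, k ≤ q → ContinuousOn (mp k g) (Set.Icc l u))
    {k : ℕ} (hk : k ≤ q) {x : Fin q → ℝ} (hx : x ∈ Set.Icc l u) :
    IntegrableOn (fun t => mp k g (patch k x t)) (Set.Icc x u) volume := by
  apply ContinuousOn.integrableOn_compact isCompact_Icc
  exact (hcont k hk).comp (continuous_patch k x).continuousOn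
    (fun t ht => patch_mem_Icc hx ht)

lemma fub {n : ℕ} (i : Fin (n + 1)) (φ : (Fin (n + 1) → ℝ) → ℝ) (x u : Fin (n + 1) → ℝ)
    (hφ : IntegrableOn φ (Set.Icc x u) volume) :
    ∫ t in Set.Icc x u, φ t =
      ∫ w : Fin n → ℝ,
        (Set.Icc (fun j => x (i.succAbove j)) (fun j => u (i.succAbove j))).indicator
          (fun w => ∫ s in Set.Icc (x i) (u i), φ (i.insertNth s w)) w := by
  set e := MeasurableEquiv.piFinSuccAbove (fun _ : Fin (n + 1) => ℝ) i with he
  set H := (Set.Icc x u).indicator φ with hH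
  have hHi : Integrable H volume := (integrable_indicator_iff measurableSet_Icc).mpr hφ
  have vp := volume_preserving_piFinSuccAbove (fun _ : Fin (n + 1) => ℝ) i
  have h2 : ∫ t, H t = ∫ p : ℝ × (Fin n → ℝ), H (e.symm p) :=
    ((vp.symm e).integral_comp' H).symm
  have hint : Integrable (fun p : ℝ × (Fin n → ℝ) => H (e.symm p)) volume :=
    ((vp.symm e).integrable_comp hHi.aestronglyMeasurable).mpr hHi
  rw [← integral_indicator measurableSet_Icc, ← hH, h2]
  rw [Measure.volume_eq_prod] at hint ⊢
  rw [integral_prod_symm _ hint]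
  refine integral_congr_ae (Filter.Eventually.of_forall fun w => ?_)
  have hes : ∀ s : ℝ, e.symm (s, w) = i.insertNth s w := fun s => rfl
  by_cases hw : w ∈ Set.Icc (fun j => x (i.succAbove j)) (fun j => u (i.succAbove j))
  · rw [Set.indicator_of_mem hw]
    rw [← integral_indicator measurableSet_Icc]
    show (∫ s : ℝ, H (e.symm (s, w))) = _
    refine integral_congr_ae (Filter.Eventually.of_forall fun s => ?_)
    simp only []
    rw [hes]
    by_cases hs : s ∈ Set.Icc (x i) (u i)
    · rw [Set.indicator_of_mem hs, hH,
        Set.indicator_of_mem (Fin.insertNth_mem_Icc.mpr ⟨hs, hw⟩)]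
    · rw [Set.indicator_of_notMem hs, hH, Set.indicator_of_notMem]
      intro hmem
      exact hs (Fin.insertNth_mem_Icc.mp hmem).1
  · rw [Set.indicator_of_notMem hw]
    have : ∀ s : ℝ, H (e.symm (s, w)) = 0 := by
      intro s
      rw [hes, hH, Set.indicator_of_notMem]
      intro hmem
      exact hw (Fin.insertNth_mem_Icc.mp hmem).2
    simp [this]

lemma step_lemma {n : ℕ} {g : (Fin (n + 1) → ℝ) → ℝ} {l u : Fin (n + 1) → ℝ}
    (hg_cont : Continuous g) (hg_supp : ∀ x, g x ≠ 0 → x ∈ Set.Icc l u)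
    (hdiff : ∀ k : Fin (n + 1), ∀ x ∈ Set.pi Set.univ (fun i => Set.Ioo (l i) (u i)),
        DifferentiableAt ℝ (fun t => mp ((k : ℕ) + 1) g (Function.update x k t)) (x k))
    (hcont : ∀ k : ℕ, k ≤ n + 1 → ContinuousOn (mp k g) (Set.Icc l u))
    (hvan : ∀ k : Fin (n + 1), 1 ≤ (k : ℕ) → ∀ x : Fin (n + 1) → ℝ,
        (∃ j : Fin (n + 1), (j : ℕ) < (k : ℕ) ∧ x j = u j) → mp (k : ℕ) g x = 0)
    {x : Fin (n + 1) → ℝ} (hx : ∀ j, x j ∈ Set.Ioo (l j) (u j)) (i : Fin (n + 1)) :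
    ∫ t in Set.Icc x u, mp ((i : ℕ) + 1) g (patch ((i : ℕ) + 1) x t)
      = -(u i - x i) * ∫ t in Set.Icc x u, mp (i : ℕ) g (patch (i : ℕ) x t) := by
  have hxI : x ∈ Set.Icc l u := ⟨fun j => (hx j).1.le, fun j => (hx j).2.le⟩
  rw [fub i _ x u (integrableOn_patch hcont (Nat.succ_le_of_lt i.isLt) hxI),
      fub i _ x u (integrableOn_patch hcont i.isLt.le hxI), ← integral_const_mul]
  have h0 : (Set.pi Set.univ fun j => Set.Ioo (x (i.succAbove j)) (u (i.succAbove j)))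
      =ᵐ[volume] Set.Icc (fun j => x (i.succAbove j)) (fun j => u (i.succAbove j)) := by
    rw [volume_pi]
    exact Measure.univ_pi_Ioo_ae_eq_Icc
  have hae := Filter.eventuallyEq_set.mp h0
  refine integral_congr_ae ?_
  filter_upwards [hae] with w hiff
  by_cases hw : w ∈ Set.Icc (fun j => x (i.succAbove j)) (fun j => u (i.succAbove j))
  · have hwo : ∀ j, w j ∈ Set.Ioo (x (i.succAbove j)) (u (i.succAbove j)) := by
      intro j
      exact (hiff.mpr hw) j (Set.mem_univ j)
    rw [Set.indicator_of_mem hw, Set.indicator_of_mem hw]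
    set y := patch ((i : ℕ) + 1) x (i.insertNth (x i) w) with hy
    have hyi : y i = x i := by simp [patch, hy]
    have hyIoo : ∀ j, y j ∈ Set.Ioo (l j) (u j) := by
      intro j
      by_cases h : (j : ℕ) < (i : ℕ) + 1
      · simpa [patch, hy, h] using hx j
      · have hne : j ≠ i := by
          intro e; subst e; exact h (Nat.lt_succ_self _)
        obtain ⟨j', rfl⟩ := Fin.exists_succAbove_eq hne
        have hww := hwo j'
        have hval : y (i.succAbove j') = w j' := by
          simp [patch, hy, h, Fin.insertNth_apply_succAbove]
        rw [hval]
        exact ⟨lt_trans (hx _).1 hww.1, hww.2⟩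
    have he1 : ∀ s : ℝ, patch ((i : ℕ) + 1) x (i.insertNth s w) = y := by
      intro s; funext j
      by_cases h : (j : ℕ) < (i : ℕ) + 1
      · simp [patch, hy, h]
      · have hne : j ≠ i := by
          intro e; subst e; exact h (Nat.lt_succ_self _)
        obtain ⟨j', rfl⟩ := Fin.exists_succAbove_eq hne
        simp [patch, hy, h, Fin.insertNth_apply_succAbove]
    have he2 : ∀ s : ℝ, patch (i : ℕ) x (i.insertNth s w) = Function.update y i s := by
      intro s; funext j
      by_cases h : j = i
      · subst h
        simp [patch, Fin.insertNth_apply_same]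
      · rw [Function.update_of_ne h]
        by_cases h2 : (j : ℕ) < (i : ℕ)
        · simp [patch, hy, h2, Nat.lt_succ_of_lt h2]
        · have h3 : ¬ (j : ℕ) < (i : ℕ) + 1 := by
            intro h4
            rcases Nat.lt_succ_iff_lt_or_eq.mp h4 with h5 | h5
            · exact h2 h5
            · exact h (Fin.ext h5)
          obtain ⟨j', rfl⟩ := Fin.exists_succAbove_eq h
          simp [patch, hy, h2, h3, Fin.insertNth_apply_succAbove]
    have hI1 : ∫ s in Set.Icc (x i) (u i), mp (i : ℕ) g (patch (i : ℕ) x (i.insertNth s w))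
        = - mp ((i : ℕ) + 1) g y := by
      simp only [he2]
      rw [integral_Icc_eq_integral_Ioc,
        ← intervalIntegral.integral_of_le (hx i).2.le, ← hyi]
      exact slice_ftc hg_cont hg_supp hdiff hcont hvan i y hyIoo
    have hI2 : ∫ s in Set.Icc (x i) (u i),
          mp ((i : ℕ) + 1) g (patch ((i : ℕ) + 1) x (i.insertNth s w))
        = (u i - x i) * mp ((i : ℕ) + 1) g y := by
      simp only [he1]
      rw [setIntegral_const, measureReal_def, Real.volume_Icc, smul_eq_mul,
        ENNReal.toReal_ofReal (by linarith [(hx i).2] : (0:ℝ) ≤ u i - x i)]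
    rw [hI1, hI2]
    ring
  · rw [Set.indicator_of_notMem hw, Set.indicator_of_notMem hw, mul_zero]

lemma key_induction {n : ℕ} {g : (Fin (n + 1) → ℝ) → ℝ} {l u : Fin (n + 1) → ℝ}
    (hg_cont : Continuous g) (hg_supp : ∀ x, g x ≠ 0 → x ∈ Set.Icc l u)
    (hdiff : ∀ k : Fin (n + 1), ∀ x ∈ Set.pi Set.univ (fun i => Set.Ioo (l i) (u i)),
        DifferentiableAt ℝ (fun t => mp ((k : ℕ) + 1) g (Function.update x k t)) (x k))
    (hcont : ∀ k : ℕ, k ≤ n + 1 → ContinuousOn (mp k g) (Set.Icc l u))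
    (hvan : ∀ k : Fin (n + 1), 1 ≤ (k : ℕ) → ∀ x : Fin (n + 1) → ℝ,
        (∃ j : Fin (n + 1), (j : ℕ) < (k : ℕ) ∧ x j = u j) → mp (k : ℕ) g x = 0)
    {x : Fin (n + 1) → ℝ} (hx : ∀ j, x j ∈ Set.Ioo (l j) (u j)) :
    ∀ k : ℕ, k ≤ n + 1 →
      ∫ t in Set.Icc x u, mp k g (patch k x t)
        = (-1 : ℝ) ^ k * (∏ j : Fin (n + 1), if (j : ℕ) < k then (u j - x j) else 1)
            * ∫ t in Set.Icc x u, mp 0 g t := by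
  intro k
  induction k with
  | zero =>
    intro _
    simp [patch_zero]
  | succ k ih =>
    intro hk1
    have hk : k < n + 1 := Nat.lt_of_succ_le hk1
    set i : Fin (n + 1) := ⟨k, hk⟩ with hi
    have hik : (i : ℕ) = k := rfl
    have hstep := step_lemma hg_cont hg_supp hdiff hcont hvan hx i
    rw [hik] at hstep
    rw [hstep, ih hk.le]
    have hprod : (∏ j : Fin (n + 1), if (j : ℕ) < k + 1 then (u j - x j) else 1)
        = (u i - x i) * ∏ j : Fin (n + 1), if (j : ℕ) < k then (u j - x j) else 1 := by
      have h1 : ∀ j : Fin (n + 1), (if (j : ℕ) < k + 1 then (u j - x j) else 1)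
          = (if j = i then (u j - x j) else 1) * (if (j : ℕ) < k then (u j - x j) else 1) := by
        intro j
        rcases lt_trichotomy (j : ℕ) k with h | h | h
        · have : j ≠ i := by
            intro e; subst e; exact absurd h (lt_irrefl _)
          simp [h, Nat.lt_succ_of_lt h, this]
        · have : j = i := Fin.ext h
          simp [this, hik, h, lt_irrefl]
        · have h2 : ¬ (j : ℕ) < k + 1 := by omega
          have h3 : ¬ (j : ℕ) < k := by omega
          have : j ≠ i := by
            intro e; subst e; exact absurd rfl (by omega : ¬ ((i:ℕ) = k)) 
          simp [h2, h3, this]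
      rw [Finset.prod_congr rfl (fun j _ => h1 j), Finset.prod_mul_distrib,
        Finset.prod_ite_eq' Finset.univ i (fun j => u j - x j)]
      simp
    rw [hprod]
    ring

lemma open_box_identity {n : ℕ} {g : (Fin (n + 1) → ℝ) → ℝ} {l u : Fin (n + 1) → ℝ}
    (hg_cont : Continuous g) (hg_supp : ∀ x, g x ≠ 0 → x ∈ Set.Icc l u)
    (hdiff : ∀ k : Fin (n + 1), ∀ x ∈ Set.pi Set.univ (fun i => Set.Ioo (l i) (u i)),
        DifferentiableAt ℝ (fun t => mp ((k : ℕ) + 1) g (Function.update x k t)) (x k))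
    (hcont : ∀ k : ℕ, k ≤ n + 1 → ContinuousOn (mp k g) (Set.Icc l u))
    (hvan : ∀ k : Fin (n + 1), 1 ≤ (k : ℕ) → ∀ x : Fin (n + 1) → ℝ,
        (∃ j : Fin (n + 1), (j : ℕ) < (k : ℕ) ∧ x j = u j) → mp (k : ℕ) g x = 0)
    {x : Fin (n + 1) → ℝ} (hx : ∀ j, x j ∈ Set.Ioo (l j) (u j)) :
    ∫ t in Set.Icc x u, mp 0 g t = (-1 : ℝ) ^ (n + 1) * g x := by
  have hkey := key_induction hg_cont hg_supp hdiff hcont hvan hx (n + 1) le_rfl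
  have hxu : x ≤ u := fun j => (hx j).2.le
  have hW : (∏ j : Fin (n + 1), if (j : ℕ) < n + 1 then (u j - x j) else 1)
      = ∏ j : Fin (n + 1), (u j - x j) :=
    Finset.prod_congr rfl fun j _ => by simp [j.isLt]
  have hLHS : ∫ t in Set.Icc x u, mp (n + 1) g (patch (n + 1) x t)
      = (∏ j : Fin (n + 1), (u j - x j)) * g x := by
    have : ∀ t : Fin (n + 1) → ℝ, mp (n + 1) g (patch (n + 1) x t) = g x := by
      intro t; rw [patch_all, mp_self]
    rw [setIntegral_congr_fun measurableSet_Icc (fun t _ => this t), setIntegral_const,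
      smul_eq_mul, measureReal_def, Real.volume_Icc_pi_toReal hxu]
  rw [hLHS, hW] at hkey
  set W := ∏ j : Fin (n + 1), (u j - x j) with hWdef
  have hWpos : 0 < W := Finset.prod_pos fun j _ => sub_pos.mpr (hx j).2
  set I := ∫ t in Set.Icc x u, mp 0 g t with hI
  rcases Nat.even_or_odd (n + 1) with hpar | hpar
  · rw [hpar.neg_one_pow] at hkey ⊢
    have : W * g x = W * I := by rw [hkey]; ring
    rw [one_mul]
    exact (mul_left_cancel₀ (ne_of_gt hWpos) this).symm
  · rw [hpar.neg_one_pow] at hkey ⊢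
    have : W * I = W * (-(g x)) := by
      have := hkey
      nlinarith [hkey]
    have h2 := mul_left_cancel₀ (ne_of_gt hWpos) this
    rw [h2]; ring

lemma closed_box_identity {n : ℕ} {g : (Fin (n + 1) → ℝ) → ℝ} {l u : Fin (n + 1) → ℝ}
    (hlu : ∀ i, l i < u i)
    (hg_cont : Continuous g) (hg_supp : ∀ x, g x ≠ 0 → x ∈ Set.Icc l u)
    (hdiff : ∀ k : Fin (n + 1), ∀ x ∈ Set.pi Set.univ (fun i => Set.Ioo (l i) (u i)),
        DifferentiableAt ℝ (fun t => mp ((k : ℕ) + 1) g (Function.update x k t)) (x k))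
    (hcont : ∀ k : ℕ, k ≤ n + 1 → ContinuousOn (mp k g) (Set.Icc l u))
    (hvan : ∀ k : Fin (n + 1), 1 ≤ (k : ℕ) → ∀ x : Fin (n + 1) → ℝ,
        (∃ j : Fin (n + 1), (j : ℕ) < (k : ℕ) ∧ x j = u j) → mp (k : ℕ) g x = 0)
    {x : Fin (n + 1) → ℝ} (hx : x ∈ Set.Icc l u) :
    ∫ t in Set.Icc x u, mp 0 g t = (-1 : ℝ) ^ (n + 1) * g x := by
  classical
  set D : (Fin (n + 1) → ℝ) → ℝ := (Set.Icc l u).indicator (mp 0 g) with hD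
  have hDint : Integrable D volume :=
    (integrable_indicator_iff measurableSet_Icc).mpr
      ((hcont 0 (Nat.zero_le _)).integrableOn_compact isCompact_Icc)
  have hΦ : ∀ x' : Fin (n + 1) → ℝ, l ≤ x' →
      ∫ t in Set.Icc x' u, mp 0 g t = ∫ t, (Set.Icc x' u).indicator D t := by
    intro x' hl'
    rw [← integral_indicator measurableSet_Icc]
    congr 1
    funext t
    by_cases ht : t ∈ Set.Icc x' u
    · have htlu : t ∈ Set.Icc l u := Set.mem_Icc.mpr ⟨fun j => le_trans (hl' j) (ht.1 j), ht.2⟩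
      rw [Set.indicator_of_mem ht, Set.indicator_of_mem ht, hD, Set.indicator_of_mem htlu]
    · rw [Set.indicator_of_notMem ht, Set.indicator_of_notMem ht]
  -- the approximating path
  set xθ : ℝ → (Fin (n + 1) → ℝ) := fun θ j => x j + θ * ((l j + u j) / 2 - x j) with hxθ
  have hxθ0 : xθ 0 = x := by funext j; simp [hxθ]
  have hxθcont : Continuous xθ := by
    refine continuous_pi fun j => ?_
    fun_prop
  have hxθmem : ∀ θ ∈ Set.Ioo (0 : ℝ) 1, ∀ j, xθ θ j ∈ Set.Ioo (l j) (u j) := by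
    intro θ hθ j
    have h1 := hx.1 j
    have h2 := hx.2 j
    have h3 := hlu j
    constructor <;> simp only [hxθ] <;> nlinarith [hθ.1, hθ.2]
  have hxθl : ∀ θ ∈ Set.Ioo (0 : ℝ) 1, l ≤ xθ θ := fun θ hθ j => (hxθmem θ hθ j).1.le
  -- dominated convergence
  have hne : ∀ᵐ t : (Fin (n + 1) → ℝ) ∂volume, ∀ j, t j ≠ x j := by
    rw [volume_pi]
    exact ae_all_iff.mpr fun j => Measure.ae_eval_ne (fun _ => (volume : Measure ℝ)) j (x j)
  have hconv : Tendsto (fun θ => ∫ t, (Set.Icc (xθ θ) u).indicator D t) (𝓝[>] (0 : ℝ))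
      (𝓝 (∫ t, (Set.Icc x u).indicator D t)) := by
    refine tendsto_integral_filter_of_dominated_convergence (fun t => ‖D t‖)
      (Filter.Eventually.of_forall fun θ =>
        hDint.aestronglyMeasurable.indicator measurableSet_Icc)
      (Filter.Eventually.of_forall fun θ =>
        (Filter.Eventually.of_forall fun t => norm_indicator_le_norm_self D t))
      hDint.norm ?_
    filter_upwards [hne] with t ht
    by_cases hA : ∀ j, x j < t j
    · have hU : {y : Fin (n + 1) → ℝ | ∀ j, y j < t j} ∈ 𝓝 x := by
        have : IsOpen {y : Fin (n + 1) → ℝ | ∀ j, y j < t j} := by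
          have : {y : Fin (n + 1) → ℝ | ∀ j, y j < t j}
              = Set.pi Set.univ (fun j => Set.Iio (t j)) := by
            ext y; simp [Set.mem_pi]
          rw [this]
          exact isOpen_set_pi Set.finite_univ fun j _ => isOpen_Iio
        exact this.mem_nhds hA
      have hev : ∀ᶠ θ in 𝓝[>] (0 : ℝ), ∀ j, xθ θ j < t j := by
        have := hxθcont.tendsto 0
        rw [hxθ0] at this
        exact (this.mono_left nhdsWithin_le_nhds).eventually_mem hU
      have hval : ∀ᶠ θ in 𝓝[>] (0 : ℝ),
          (Set.Icc (xθ θ) u).indicator D t = (Set.Icc x u).indicator D t := by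
        filter_upwards [hev] with θ hθ
        by_cases htu : t ≤ u
        · have hm1 : t ∈ Set.Icc (xθ θ) u := Set.mem_Icc.mpr ⟨fun j => (hθ j).le, htu⟩
          have hm2 : t ∈ Set.Icc x u := Set.mem_Icc.mpr ⟨fun j => (hA j).le, htu⟩
          rw [Set.indicator_of_mem hm1, Set.indicator_of_mem hm2]
        · have h1 : t ∉ Set.Icc (xθ θ) u := fun hmem => htu hmem.2
          have h2 : t ∉ Set.Icc x u := fun hmem => htu hmem.2
          rw [Set.indicator_of_notMem h1, Set.indicator_of_notMem h2]
      exact (tendsto_congr' hval).mpr tendsto_const_nhds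
    · push_neg at hA
      obtain ⟨j0, hj0⟩ := hA
      have hj0' : t j0 < x j0 := lt_of_le_of_ne hj0 (ht j0)
      have hV : {y : Fin (n + 1) → ℝ | t j0 < y j0} ∈ 𝓝 x :=
        (isOpen_lt continuous_const (continuous_apply j0)).mem_nhds hj0'
      have hev : ∀ᶠ θ in 𝓝[>] (0 : ℝ), t j0 < xθ θ j0 := by
        have := hxθcont.tendsto 0
        rw [hxθ0] at this
        exact (this.mono_left nhdsWithin_le_nhds).eventually_mem hV
      have hlim0 : t ∉ Set.Icc x u := fun hmem => absurd (hmem.1 j0) (not_le.mpr hj0')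
      rw [Set.indicator_of_notMem hlim0]
      have hval : ∀ᶠ θ in 𝓝[>] (0 : ℝ), (Set.Icc (xθ θ) u).indicator D t = 0 := by
        filter_upwards [hev] with θ hθ
        exact Set.indicator_of_notMem (fun hmem => absurd (hmem.1 j0) (not_le.mpr hθ)) D
      exact (tendsto_congr' hval).mpr tendsto_const_nhds
  have hIoo : Set.Ioo (0 : ℝ) 1 ∈ 𝓝[>] (0 : ℝ) :=
    Ioo_mem_nhdsGT_of_mem ⟨le_refl 0, zero_lt_one⟩
  have heq : ∀ᶠ θ in 𝓝[>] (0 : ℝ),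
      ∫ t, (Set.Icc (xθ θ) u).indicator D t = (-1 : ℝ) ^ (n + 1) * g (xθ θ) := by
    filter_upwards [hIoo] with θ hθ
    rw [← hΦ (xθ θ) (hxθl θ hθ)]
    exact open_box_identity hg_cont hg_supp hdiff hcont hvan (hxθmem θ hθ)
  have hg_lim : Tendsto (fun θ => (-1 : ℝ) ^ (n + 1) * g (xθ θ)) (𝓝[>] (0 : ℝ))
      (𝓝 ((-1 : ℝ) ^ (n + 1) * g x)) := by
    have h1 : Tendsto (fun θ => g (xθ θ)) (𝓝[>] (0 : ℝ)) (𝓝 (g x)) := by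
      have h2 : Tendsto xθ (𝓝 0) (𝓝 x) := by
        have := hxθcont.tendsto 0
        rwa [hxθ0] at this
      exact (hg_cont.tendsto x).comp (h2.mono_left nhdsWithin_le_nhds)
    exact h1.const_mul _
  have := tendsto_nhds_unique ((tendsto_congr' heq).mp hconv) hg_lim
  rw [hΦ x hx.1, this]

theorem stmt3 (q : ℕ) (hq : 0 < q) (F : Measure (Fin q → ℝ)) [IsProbabilityMeasure F]
    (f g : (Fin q → ℝ) → ℝ) (hf : Integrable f F)
    (l u : Fin q → ℝ) (hlu : ∀ i, l i < u i)
    (hg_cont : Continuous g) (hg_bdd : ∃ C : ℝ, ∀ x, |g x| ≤ C)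
    (hg_supp : ∀ x, g x ≠ 0 → x ∈ Set.Icc l u)
    (hdiff : ∀ k : Fin q, ∀ x ∈ Set.pi Set.univ (fun i => Set.Ioo (l i) (u i)),
        DifferentiableAt ℝ (fun t => mp ((k : ℕ) + 1) g (Function.update x k t)) (x k))
    (hcont : ∀ k : ℕ, k ≤ q → ContinuousOn (mp k g) (Set.Icc l u))
    (hvan : ∀ k : Fin q, 1 ≤ (k : ℕ) → ∀ x : Fin q → ℝ,
        (∃ j : Fin q, (j : ℕ) < (k : ℕ) ∧ x j = u j) → mp (k : ℕ) g x = 0) :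
    ∫ x, f x * g x ∂F
      = (-1 : ℝ) ^ q * ∫ t in Set.Icc l u, (∫ x in Set.Icc l t, f x ∂F) * mp 0 g t := by
  obtain ⟨n, rfl⟩ : ∃ n, q = n + 1 := ⟨q - 1, (Nat.succ_pred_eq_of_pos hq).symm⟩
  classical
  set Dt : (Fin (n + 1) → ℝ) → ℝ := (Set.Icc l u).indicator (mp 0 g) with hDt
  have hDint : Integrable Dt volume :=
    (integrable_indicator_iff measurableSet_Icc).mpr
      ((hcont 0 (Nat.zero_le _)).integrableOn_compact isCompact_Icc)
  obtain ⟨C, hC⟩ := isCompact_Icc.exists_bound_of_continuousOn (hcont 0 (Nat.zero_le _))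
  have hDtb : ∀ t, ‖Dt t‖ ≤ max C 0 := by
    intro t
    by_cases ht : t ∈ Set.Icc l u
    · rw [hDt, Set.indicator_of_mem ht]; exact le_max_of_le_left (hC t ht)
    · rw [hDt, Set.indicator_of_notMem ht]; simp
  have hpow : (-1 : ℝ) ^ (n + 1) * (-1 : ℝ) ^ (n + 1) = 1 := by
    rw [← pow_add, ← two_mul, pow_mul]; norm_num
  have hgid : ∀ x ∈ Set.Icc l u,
      g x = (-1 : ℝ) ^ (n + 1) * ∫ t in Set.Icc x u, mp 0 g t := by
    intro x hx
    rw [closed_box_identity hlu hg_cont hg_supp hdiff hcont hvan hx, ← mul_assoc, hpow,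
      one_mul]
  have h1 : ∫ x, f x * g x ∂F = ∫ x in Set.Icc l u, f x * g x ∂F := by
    rw [← integral_indicator measurableSet_Icc]
    refine integral_congr_ae (Filter.Eventually.of_forall fun x => ?_)
    by_cases hx : x ∈ Set.Icc l u
    · rw [Set.indicator_of_mem hx]
    · rw [Set.indicator_of_notMem hx]
      have hg0 : g x = 0 := by
        by_contra h
        exact hx (hg_supp x h)
      show f x * g x = 0
      rw [hg0, mul_zero]
  have hsub : ∀ x ∈ Set.Icc l u, Set.Icc x u ⊆ Set.Icc l u := fun x hx t ht =>
    ⟨fun j => le_trans (hx.1 j) (ht.1 j), ht.2⟩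
  have hΦind : ∀ x ∈ Set.Icc l u,
      ∫ t in Set.Icc x u, mp 0 g t = ∫ t in Set.Icc l u, (Set.Icc x u).indicator Dt t := by
    intro x hx
    rw [setIntegral_indicator measurableSet_Icc,
      Set.inter_eq_self_of_subset_right (hsub x hx)]
    exact setIntegral_congr_fun measurableSet_Icc fun t ht =>
      (Set.indicator_of_mem (hsub x hx ht) _).symm
  have h2 : ∫ x in Set.Icc l u, f x * g x ∂F
      = (-1 : ℝ) ^ (n + 1) * ∫ x in Set.Icc l u,
          (∫ t in Set.Icc l u, f x * (Set.Icc x u).indicator Dt t) ∂F := by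
    rw [← integral_const_mul]
    refine setIntegral_congr_fun measurableSet_Icc fun x hx => ?_
    rw [integral_const_mul, ← hΦind x hx, hgid x hx]
    ring
  -- Fubini
  have hS1 : IsClosed {p : (Fin (n + 1) → ℝ) × (Fin (n + 1) → ℝ) | p.1 ≤ p.2} := by
    have he : {p : (Fin (n + 1) → ℝ) × (Fin (n + 1) → ℝ) | p.1 ≤ p.2}
        = ⋂ j, {p : (Fin (n + 1) → ℝ) × (Fin (n + 1) → ℝ) | p.1 j ≤ p.2 j} := by
      ext p; simp [Pi.le_def]
    rw [he]
    exact isClosed_iInter fun j => isClosed_le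
      ((continuous_apply j).comp continuous_fst) ((continuous_apply j).comp continuous_snd)
  have hS2 : IsClosed {p : (Fin (n + 1) → ℝ) × (Fin (n + 1) → ℝ) | p.2 ≤ u} := by
    have he : {p : (Fin (n + 1) → ℝ) × (Fin (n + 1) → ℝ) | p.2 ≤ u}
        = ⋂ j, {p : (Fin (n + 1) → ℝ) × (Fin (n + 1) → ℝ) | p.2 j ≤ u j} := by
      ext p; simp [Pi.le_def]
    rw [he]
    exact isClosed_iInter fun j => isClosed_le
      ((continuous_apply j).comp continuous_snd) continuous_const
  have hS : MeasurableSet {p : (Fin (n + 1) → ℝ) × (Fin (n + 1) → ℝ) |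
      p.1 ≤ p.2 ∧ p.2 ≤ u} := by
    have he : {p : (Fin (n + 1) → ℝ) × (Fin (n + 1) → ℝ) | p.1 ≤ p.2 ∧ p.2 ≤ u}
        = {p : (Fin (n + 1) → ℝ) × (Fin (n + 1) → ℝ) | p.1 ≤ p.2}
          ∩ {p : (Fin (n + 1) → ℝ) × (Fin (n + 1) → ℝ) | p.2 ≤ u} := rfl
    rw [he]
    exact (hS1.inter hS2).measurableSet
  have hψeq : (fun p : (Fin (n + 1) → ℝ) × (Fin (n + 1) → ℝ) =>
        f p.1 * (Set.Icc p.1 u).indicator Dt p.2)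
      = fun p => f p.1 * ({p : (Fin (n + 1) → ℝ) × (Fin (n + 1) → ℝ) |
          p.1 ≤ p.2 ∧ p.2 ≤ u}.indicator (fun p => Dt p.2) p) := by
    funext p
    simp only [Set.indicator_apply, Set.mem_Icc, Set.mem_setOf_eq]
  have hfin : IsFiniteMeasure ((volume : Measure (Fin (n + 1) → ℝ)).restrict (Set.Icc l u)) :=
    ⟨by rw [Measure.restrict_apply_univ]; exact isCompact_Icc.measure_lt_top⟩
  have hbound : Integrable (fun p : (Fin (n + 1) → ℝ) × (Fin (n + 1) → ℝ) =>
      ‖f p.1‖ * max C 0)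
      ((F.restrict (Set.Icc l u)).prod (volume.restrict (Set.Icc l u))) :=
    (hf.restrict.norm).mul_prod (integrable_const _)
  have hAESM : AEStronglyMeasurable (fun p : (Fin (n + 1) → ℝ) × (Fin (n + 1) → ℝ) =>
      f p.1 * (Set.Icc p.1 u).indicator Dt p.2)
      ((F.restrict (Set.Icc l u)).prod (volume.restrict (Set.Icc l u))) := by
    rw [hψeq]
    exact (hf.aestronglyMeasurable.restrict.comp_fst).mul
      ((hDint.aestronglyMeasurable.restrict.comp_snd).indicator hS)
  have hint : Integrable (Function.uncurry fun x t => f x * (Set.Icc x u).indicator Dt t)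
      ((F.restrict (Set.Icc l u)).prod (volume.restrict (Set.Icc l u))) := by
    refine Integrable.mono' hbound hAESM (Filter.Eventually.of_forall fun p => ?_)
    show ‖f p.1 * (Set.Icc p.1 u).indicator Dt p.2‖ ≤ ‖f p.1‖ * max C 0
    rw [norm_mul]
    exact mul_le_mul_of_nonneg_left
      (le_trans (norm_indicator_le_norm_self Dt p.2) (hDtb p.2)) (norm_nonneg _)
  have h4 := integral_integral_swap hint
  have h5 : ∫ t in Set.Icc l u,
        (∫ x in Set.Icc l u, f x * (Set.Icc x u).indicator Dt t ∂F)
      = ∫ t in Set.Icc l u, (∫ x in Set.Icc l t, f x ∂F) * mp 0 g t := by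
    refine setIntegral_congr_fun measurableSet_Icc fun t ht => ?_
    have hx_eq : ∀ x ∈ Set.Icc l u, f x * (Set.Icc x u).indicator Dt t
        = (Set.Icc l t).indicator f x * Dt t := by
      intro x hx
      by_cases hxt : x ≤ t
      · rw [Set.indicator_of_mem (Set.mem_Icc.mpr ⟨hxt, ht.2⟩),
          Set.indicator_of_mem (Set.mem_Icc.mpr ⟨hx.1, hxt⟩)]
      · rw [Set.indicator_of_notMem (fun hm => hxt (Set.mem_Icc.mp hm).1),
          Set.indicator_of_notMem (fun hm => hxt (Set.mem_Icc.mp hm).2), mul_zero,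
          zero_mul]
    have hsub2 : Set.Icc l t ⊆ Set.Icc l u := fun x hx =>
      Set.mem_Icc.mpr ⟨(Set.mem_Icc.mp hx).1,
        fun j => le_trans ((Set.mem_Icc.mp hx).2 j) (ht.2 j)⟩
    rw [setIntegral_congr_fun measurableSet_Icc hx_eq, integral_mul_const,
      setIntegral_indicator measurableSet_Icc,
      Set.inter_eq_self_of_subset_right hsub2, hDt, Set.indicator_of_mem ht]
  rw [h1, h2]
  congr 1
  rw [h4]
  exact h5
end

section
/- Let q = 1, let F be a Borel probability measure on ℝ, f ∈ L¹(F), and let g : ℝ → ℝ be continuous, supported in [l,u], and continuously differentiable on (l,u) with derivative extending continuously to [l,u]. Then ∫ f·g dF = −∫_l^u Ω_f(l,t) g'(t) dt, where Ω_f(l,t) = ∫ 𝟙{l ≤ x ≤ t} f(x) dF(x). -/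
/-!
On `[l, u]` the fundamental theorem of calculus gives `g x = -∫_x^u g'`, because `g u = 0` by
continuity and the support condition. Hence `∫ f g dF = -∫∫_{x ≤ t} f(x) g'(t) dF(x) dt` over
`[l, u]²`, and integrating first in `x` (Fubini) turns the inner integral into `Ω_f(l, t)`.
-/

open MeasureTheory Set

theorem integral_mul_setIntegral_Ici_eq {μ ν : Measure ℝ} [SFinite μ] [SFinite ν] {f g : ℝ → ℝ}
    (hf : Integrable f μ) (hg : Integrable g ν) :
    ∫ x, f x * ∫ t in Ici x, g t ∂ν ∂μ = ∫ t, (∫ x in Iic t, f x ∂μ) * g t ∂ν := by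
  set S : Set (ℝ × ℝ) := {z | z.1 ≤ z.2}
  have hS : MeasurableSet S := measurableSet_le measurable_fst measurable_snd
  have hint : Integrable (S.indicator fun z : ℝ × ℝ => f z.1 * g z.2) (μ.prod ν) :=
    (hf.mul_prod hg).indicator hS
  calc ∫ x, f x * ∫ t in Ici x, g t ∂ν ∂μ
      = ∫ x, ∫ t, S.indicator (fun z : ℝ × ℝ => f z.1 * g z.2) (x, t) ∂ν ∂μ := by
        congr 1 with x
        rw [← integral_indicator measurableSet_Ici, ← integral_const_mul]
        congr 1 with t
        by_cases hxt : x ≤ t <;> simp [S, hxt]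
    _ = ∫ t, ∫ x, S.indicator (fun z : ℝ × ℝ => f z.1 * g z.2) (x, t) ∂μ ∂ν :=
        integral_integral_swap hint
    _ = ∫ t, (∫ x in Iic t, f x ∂μ) * g t ∂ν := by
        congr 1 with t
        rw [← integral_indicator measurableSet_Iic, ← integral_mul_const]
        congr 1 with x
        by_cases hxt : x ≤ t <;> simp [S, hxt]

theorem eq_neg_setIntegral_Icc_of_hasDerivAt {g g' : ℝ → ℝ} {l u x : ℝ} (hg : Continuous g)
    (hg_supp : ∀ y, g y ≠ 0 → y ∈ Icc l u) (hg_deriv : ∀ y ∈ Ioo l u, HasDerivAt g (g' y) y)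
    (hg' : ContinuousOn g' (Icc l u)) (hx : x ∈ Icc l u) :
    g x = -∫ t in Icc x u, g' t := by
  have hgu : g u = 0 := by
    refine (isClosed_eq hg continuous_const).closure_subset_iff.2 (fun y hy => ?_)
      (by simp [closure_Ioi] : u ∈ closure (Ioi u))
    by_contra hy0
    exact not_le.2 hy (hg_supp y hy0).2
  have hftc : ∫ t in x..u, g' t = g u - g x :=
    intervalIntegral.integral_eq_sub_of_hasDeriv_right_of_le hx.2 hg.continuousOn
      (fun t ht => (hg_deriv t ⟨hx.1.trans_lt ht.1, ht.2⟩).hasDerivWithinAt)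
      ((hg'.mono (Icc_subset_Icc_left hx.1)).intervalIntegrable_of_Icc hx.2)
  rw [integral_Icc_eq_integral_Ioc, ← intervalIntegral.integral_of_le hx.2, hftc, hgu]
  ring

theorem stmt4_general (F : Measure ℝ) [IsProbabilityMeasure F]
    (f : ℝ → ℝ) (hf : Integrable f F)
    (g g' : ℝ → ℝ) (l u : ℝ)
    (hg_cont : Continuous g)
    (hg_supp : ∀ x, g x ≠ 0 → x ∈ Set.Icc l u)
    (hg_deriv : ∀ x ∈ Set.Ioo l u, HasDerivAt g (g' x) x)
    (hg'_cont : ContinuousOn g' (Set.Icc l u)) :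
    ∫ x, f x * g x ∂F
      = - ∫ t in Set.Icc l u, (∫ x in Set.Icc l t, f x ∂F) * g' t := by
  calc ∫ x, f x * g x ∂F
      = ∫ x in Icc l u, f x * g x ∂F :=
        (setIntegral_eq_integral_of_forall_compl_eq_zero fun x hx => by
          rw [not_imp_comm.1 (hg_supp x) hx, mul_zero]).symm
    _ = -∫ x in Icc l u, f x * ∫ t in Ici x, g' t ∂(volume.restrict (Icc l u)) ∂F := by
        rw [← integral_neg]
        refine setIntegral_congr_fun measurableSet_Icc fun x hx => ?_
        have hIcc : Ici x ∩ Icc l u = Icc x u := by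
          ext t; simp only [mem_inter_iff, mem_Ici, mem_Icc]; grind
        rw [Measure.restrict_restrict measurableSet_Ici, hIcc,
          eq_neg_setIntegral_Icc_of_hasDerivAt hg_cont hg_supp hg_deriv hg'_cont hx, mul_neg]
    _ = -∫ t in Icc l u, (∫ x in Iic t, f x ∂(F.restrict (Icc l u))) * g' t := by
        rw [integral_mul_setIntegral_Ici_eq hf.restrict hg'_cont.integrableOn_Icc]
    _ = -∫ t in Icc l u, (∫ x in Icc l t, f x ∂F) * g' t := by
        congr 1
        refine setIntegral_congr_fun measurableSet_Icc fun t ht => ?_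
        have hIcc : Iic t ∩ Icc l u = Icc l t := by
          ext x; simp only [mem_inter_iff, mem_Iic, mem_Icc]; grind
        rw [Measure.restrict_restrict measurableSet_Iic, hIcc]

theorem stmt4 (F : Measure ℝ) [IsProbabilityMeasure F]
    (f : ℝ → ℝ) (hf : Integrable f F)
    (g g' : ℝ → ℝ) (l u : ℝ) (hlu : l < u)
    (hg_cont : Continuous g)
    (hg_supp : ∀ x, g x ≠ 0 → x ∈ Set.Icc l u)
    (hg_deriv : ∀ x ∈ Set.Ioo l u, HasDerivAt g (g' x) x)
    (hg'_cont : ContinuousOn g' (Set.Icc l u)) :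
    ∫ x, f x * g x ∂F
      = - ∫ t in Set.Icc l u, (∫ x in Set.Icc l t, f x ∂F) * g' t :=
  stmt4_general F f hf g g' l u hg_cont hg_supp hg_deriv hg'_cont
end

section
/- Suppose k : ℝ → ℝ is continuous, supported in [−1,1], and twice continuously differentiable on (−1,1) with derivatives extending continuously to [−1,1]. Let φ ∈ C¹(ℝ) with φ(0) = 0. Then the function T(u) = ∫_{−1}^{1} φ(∂_v[k(v)k(u+v)]) · 𝟙{−1 ≤ u+v ≤ 1} dv is continuous on ℝ, has support contained in [−2,2], and is continuously differentiable on [−2,2] (with one-sided derivatives at the endpoints equal to 0). -/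
open MeasureTheory Metric Set Filter Topology
open scoped ENNReal

namespace Stmt5Aux

noncomputable def cl (x : ℝ) : ℝ := max (-1) (min 1 x)

lemma cl_mem (x : ℝ) : cl x ∈ Icc (-1:ℝ) 1 :=
  ⟨le_max_left _ _, max_le (by norm_num) (min_le_left _ _)⟩

lemma cl_eq {x : ℝ} (hx : x ∈ Icc (-1:ℝ) 1) : cl x = x := by
  simp only [cl, min_eq_right hx.2, max_eq_right hx.1]

lemma cl_cont : Continuous cl := continuous_const.max (continuous_const.min continuous_id)

noncomputable def ext (f : ℝ → ℝ) (x : ℝ) : ℝ := f (cl x)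

lemma ext_cont {f : ℝ → ℝ} (hf : ContinuousOn f (Icc (-1:ℝ) 1)) : Continuous (ext f) := by
  rw [← continuousOn_univ]
  exact hf.comp cl_cont.continuousOn (fun x _ => cl_mem x)

lemma ext_eq (f : ℝ → ℝ) {x : ℝ} (hx : x ∈ Icc (-1:ℝ) 1) : ext f x = f x := by
  rw [ext, cl_eq hx]

lemma ext_hasDeriv {f f' : ℝ → ℝ} (hd : ∀ v ∈ Ioo (-1:ℝ) 1, HasDerivAt f (f' v) v) {x : ℝ}
    (hx : x ∈ Ioo (-1:ℝ) 1) : HasDerivAt (ext f) (f' x) x := by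
  have h1 : ext f =ᶠ[𝓝 x] f := by
    filter_upwards [isOpen_Ioo.mem_nhds hx] with y hy
    exact ext_eq f (Ioo_subset_Icc_self hy)
  exact (hd x hx).congr_of_eventuallyEq h1

noncomputable def vv (u t : ℝ) : ℝ := -1 + (2 - u) * t

noncomputable def gg (k k' φ : ℝ → ℝ) (u v : ℝ) : ℝ :=
  φ (ext k' v * k (u + v) + k v * ext k' (u + v))

noncomputable def GG (k k' φ : ℝ → ℝ) (u t : ℝ) : ℝ := gg k k' φ u (vv u t)

noncomputable def DD (k k' k'' φ : ℝ → ℝ) (u t : ℝ) : ℝ :=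
  deriv φ (ext k' (vv u t) * k (u + vv u t) + k (vv u t) * ext k' (u + vv u t)) *
    ((-t) * (ext k'' (vv u t) * k (u + vv u t) + ext k' (vv u t) * ext k' (u + vv u t)) +
      (1 - t) * (ext k' (vv u t) * ext k' (u + vv u t) + k (vv u t) * ext k'' (u + vv u t)))

noncomputable def SS (k k' φ : ℝ → ℝ) (u : ℝ) : ℝ := ∫ t in (0:ℝ)..1, GG k k' φ u t

noncomputable def DS (k k' k'' φ : ℝ → ℝ) (u : ℝ) : ℝ := ∫ t in (0:ℝ)..1, DD k k' k'' φ u t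

noncomputable def DR (k k' k'' φ : ℝ → ℝ) (u : ℝ) : ℝ :=
  -(SS k k' φ u) + (2 - u) * DS k k' k'' φ u

section Core

variable {k k' k'' φ : ℝ → ℝ} {T : ℝ → ℝ}

lemma deriv_GG (hφ : ContDiff ℝ 1 φ)
    (hk'_deriv : ∀ v ∈ Set.Ioo (-1 : ℝ) 1, HasDerivAt k (k' v) v)
    (hk''_deriv : ∀ v ∈ Set.Ioo (-1 : ℝ) 1, HasDerivAt k' (k'' v) v)
    {t x : ℝ} (ht : t ∈ Ioo (0:ℝ) 1) (hx : x ∈ Ioo (0:ℝ) 2) :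
    HasDerivAt (fun u => GG k k' φ u t) (DD k k' k'' φ x t) x := by
  obtain ⟨ht0, ht1⟩ := ht
  obtain ⟨hx0, hx2⟩ := hx
  set v := vv x t with hvdef
  have hv : v ∈ Ioo (-1:ℝ) 1 := by
    rw [hvdef, vv]; constructor <;> nlinarith
  have hw : x + v ∈ Ioo (-1:ℝ) 1 := by
    rw [hvdef, vv]; constructor <;> nlinarith
  have hVt : HasDerivAt (fun u => vv u t) (-t) x := by
    have h := (((hasDerivAt_id x).const_sub 2).mul_const t).const_add (-1 : ℝ)
    simp only [vv]
    exact h.congr_deriv (by ring)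
  have hWt : HasDerivAt (fun u => u + vv u t) (1 + -t) x := (hasDerivAt_id x).add hVt
  have hkv : HasDerivAt (fun u => k (vv u t)) (k' v * -t) x :=
    (hk'_deriv v hv).comp x hVt
  have hkw : HasDerivAt (fun u => k (u + vv u t)) (k' (x + v) * (1 + -t)) x :=
    (hk'_deriv _ hw).comp x hWt
  have hpv : HasDerivAt (fun u => ext k' (vv u t)) (k'' v * -t) x :=
    by have := (ext_hasDeriv hk''_deriv hv).comp x hVt; exact this
  have hpw : HasDerivAt (fun u => ext k' (u + vv u t)) (k'' (x + v) * (1 + -t)) x :=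
    by have := (ext_hasDeriv hk''_deriv hw).comp x hWt; exact this
  have harg := (hpv.mul hkw).add (hkv.mul hpw)
  have hφd : HasDerivAt φ
      (deriv φ (ext k' v * k (x + v) + k v * ext k' (x + v)))
      (ext k' v * k (x + v) + k v * ext k' (x + v)) :=
    ((hφ.differentiable one_ne_zero) _).hasDerivAt
  have final := hφd.comp x harg
  have e1 : ext k' v = k' v := ext_eq k' (Ioo_subset_Icc_self hv)
  have e2 : ext k' (x + v) = k' (x + v) := ext_eq k' (Ioo_subset_Icc_self hw)
  have e3 : ext k'' v = k'' v := ext_eq k'' (Ioo_subset_Icc_self hv)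
  have e4 : ext k'' (x + v) = k'' (x + v) := ext_eq k'' (Ioo_subset_Icc_self hw)
  simp only [GG, gg]
  refine final.congr_deriv ?_
  simp only [DD, ← hvdef, e1, e2, e3, e4]
  ring

lemma cont_vv : Continuous (fun p : ℝ × ℝ => vv p.1 p.2) := by
  simp only [vv]; fun_prop

lemma cont_gg (hk_cont : Continuous k) (hk'_cont : ContinuousOn k' (Icc (-1:ℝ) 1))
    (hφ : ContDiff ℝ 1 φ) : Continuous (fun p : ℝ × ℝ => gg k k' φ p.1 p.2) := by
  have h1 := ext_cont hk'_cont
  have h2 : Continuous φ := hφ.continuous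
  simp only [gg]
  fun_prop

lemma cont_GG (hk_cont : Continuous k) (hk'_cont : ContinuousOn k' (Icc (-1:ℝ) 1))
    (hφ : ContDiff ℝ 1 φ) : Continuous (fun p : ℝ × ℝ => GG k k' φ p.1 p.2) :=
  (cont_gg hk_cont hk'_cont hφ).comp (continuous_fst.prodMk cont_vv)

lemma cont_DD (hk_cont : Continuous k) (hk'_cont : ContinuousOn k' (Icc (-1:ℝ) 1))
    (hk''_cont : ContinuousOn k'' (Icc (-1:ℝ) 1))
    (hφ : ContDiff ℝ 1 φ) : Continuous (fun p : ℝ × ℝ => DD k k' k'' φ p.1 p.2) := by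
  have h1 := ext_cont hk'_cont
  have h2 := ext_cont hk''_cont
  have h3 : Continuous (deriv φ) := hφ.continuous_deriv le_rfl
  have h4 : Continuous (fun p : ℝ × ℝ => vv p.1 p.2) := cont_vv
  simp only [DD]
  fun_prop

lemma cont_SS (hk_cont : Continuous k) (hk'_cont : ContinuousOn k' (Icc (-1:ℝ) 1))
    (hφ : ContDiff ℝ 1 φ) : Continuous (SS k k' φ) :=
  intervalIntegral.continuous_parametric_intervalIntegral_of_continuous'
    (f := GG k k' φ) (cont_GG hk_cont hk'_cont hφ) 0 1

lemma cont_DS (hk_cont : Continuous k) (hk'_cont : ContinuousOn k' (Icc (-1:ℝ) 1))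
    (hk''_cont : ContinuousOn k'' (Icc (-1:ℝ) 1)) (hφ : ContDiff ℝ 1 φ) :
    Continuous (DS k k' k'' φ) :=
  intervalIntegral.continuous_parametric_intervalIntegral_of_continuous'
    (f := DD k k' k'' φ) (cont_DD hk_cont hk'_cont hk''_cont hφ) 0 1

lemma cont_DR (hk_cont : Continuous k) (hk'_cont : ContinuousOn k' (Icc (-1:ℝ) 1))
    (hk''_cont : ContinuousOn k'' (Icc (-1:ℝ) 1)) (hφ : ContDiff ℝ 1 φ) :
    Continuous (DR k k' k'' φ) := by
  have h1 := cont_SS hk_cont hk'_cont hφ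
  have h2 := cont_DS hk_cont hk'_cont hk''_cont hφ
  exact h1.neg.add ((continuous_const.sub continuous_id).mul h2)

lemma hasDerivAt_SS (hk_cont : Continuous k) (hk'_cont : ContinuousOn k' (Icc (-1:ℝ) 1))
    (hk''_cont : ContinuousOn k'' (Icc (-1:ℝ) 1)) (hφ : ContDiff ℝ 1 φ)
    (hk'_deriv : ∀ v ∈ Set.Ioo (-1 : ℝ) 1, HasDerivAt k (k' v) v)
    (hk''_deriv : ∀ v ∈ Set.Ioo (-1 : ℝ) 1, HasDerivAt k' (k'' v) v)
    {x₀ : ℝ} (hx : x₀ ∈ Ioo (0:ℝ) 2) :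
    HasDerivAt (SS k k' φ) (DS k k' k'' φ x₀) x₀ := by
  obtain ⟨hx0, hx2⟩ := hx
  set ε : ℝ := min x₀ (2 - x₀) with hε
  have hεpos : 0 < ε := lt_min hx0 (by linarith)
  have hball : ball x₀ ε ⊆ Ioo (0:ℝ) 2 := by
    intro y hy
    rw [mem_ball, Real.dist_eq, abs_sub_lt_iff] at hy
    constructor
    · have := min_le_left x₀ (2 - x₀); nlinarith [hy.2]
    · have := min_le_right x₀ (2 - x₀); nlinarith [hy.1]
  have hIcc : ball x₀ ε ⊆ Icc (x₀ - ε) (x₀ + ε) := by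
    intro y hy
    rw [mem_ball, Real.dist_eq, abs_sub_lt_iff] at hy
    constructor <;> linarith [hy.1, hy.2]
  obtain ⟨C, hC⟩ := (isCompact_Icc.prod isCompact_Icc :
      IsCompact (Icc (x₀ - ε) (x₀ + ε) ×ˢ Icc (0:ℝ) 1)).exists_bound_of_continuousOn
    (cont_DD hk_cont hk'_cont hk''_cont hφ).continuousOn
  have hI : Set.uIoc (0:ℝ) 1 = Ioc 0 1 := uIoc_of_le zero_le_one
  have hGu : ∀ x : ℝ, Continuous (fun t => GG k k' φ x t) :=
    fun x => (cont_GG hk_cont hk'_cont hφ).comp (continuous_const.prodMk continuous_id)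
  have hDu : ∀ x : ℝ, Continuous (fun t => DD k k' k'' φ x t) :=
    fun x => (cont_DD hk_cont hk'_cont hk''_cont hφ).comp
      (continuous_const.prodMk continuous_id)
  have hne : ∀ᵐ t : ℝ, t ≠ 1 := by
    have : ({t : ℝ | ¬ t ≠ 1} : Set ℝ) = {1} := by ext y; simp
    rw [ae_iff, this]
    exact measure_singleton 1
  have key := intervalIntegral.hasDerivAt_integral_of_dominated_loc_of_deriv_le
    (F := fun u t => GG k k' φ u t) (F' := fun u t => DD k k' k'' φ u t)
    (a := 0) (b := 1) (μ := volume) (x₀ := x₀) (bound := fun _ => |C|) (ball_mem_nhds x₀ hεpos)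
    (Eventually.of_forall fun x => (hGu x).aestronglyMeasurable)
    ((hGu x₀).intervalIntegrable 0 1)
    ((hDu x₀).aestronglyMeasurable)
    ?_ (intervalIntegrable_const) ?_
  · exact key.2
  · refine Eventually.of_forall fun t ht x hxb => ?_
    rw [hI] at ht
    calc ‖DD k k' k'' φ x t‖ ≤ C := hC (x, t) ⟨hIcc hxb, Ioc_subset_Icc_self ht⟩
    _ ≤ |C| := le_abs_self C
  · filter_upwards [hne] with t ht1 htI x hxb
    rw [hI] at htI
    exact deriv_GG hφ hk'_deriv hk''_deriv ⟨htI.1, lt_of_le_of_ne htI.2 ht1⟩ (hball hxb)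

lemma deriv_GG0 (hφ : ContDiff ℝ 1 φ)
    (hk'_deriv : ∀ v ∈ Set.Ioo (-1 : ℝ) 1, HasDerivAt k (k' v) v)
    (hk''_deriv : ∀ v ∈ Set.Ioo (-1 : ℝ) 1, HasDerivAt k' (k'' v) v)
    {t : ℝ} (ht : t ∈ Ioo (0:ℝ) 1) :
    HasDerivAt (fun s => (1/4) * ((1 - 2*s) * GG k k' φ 0 s))
      (DD k k' k'' φ 0 t - GG k k' φ 0 t / 2) t := by
  obtain ⟨ht0, ht1⟩ := ht
  set v := vv 0 t with hvdef
  have hv : v ∈ Ioo (-1:ℝ) 1 := by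
    rw [hvdef, vv]; constructor <;> nlinarith
  have hw : (0:ℝ) + v ∈ Ioo (-1:ℝ) 1 := by rw [zero_add]; exact hv
  have hVt : HasDerivAt (fun s => vv 0 s) 2 t := by
    have h := (((hasDerivAt_id t).const_mul (2 - (0:ℝ)))).const_add (-1 : ℝ)
    simp only [vv]
    exact h.congr_deriv (by ring)
  have hWt : HasDerivAt (fun s => (0:ℝ) + vv 0 s) 2 t := by
    simpa using hVt.const_add 0
  have hkv : HasDerivAt (fun s => k (vv 0 s)) (k' v * 2) t := (hk'_deriv v hv).comp t hVt
  have hkw : HasDerivAt (fun s => k ((0:ℝ) + vv 0 s)) (k' (0 + v) * 2) t :=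
    (hk'_deriv _ hw).comp t hWt
  have hpv : HasDerivAt (fun s => ext k' (vv 0 s)) (k'' v * 2) t :=
    by have := (ext_hasDeriv hk''_deriv hv).comp t hVt; exact this
  have hpw : HasDerivAt (fun s => ext k' ((0:ℝ) + vv 0 s)) (k'' (0 + v) * 2) t :=
    by have := (ext_hasDeriv hk''_deriv hw).comp t hWt; exact this
  have harg := (hpv.mul hkw).add (hkv.mul hpw)
  have hφd : HasDerivAt φ
      (deriv φ (ext k' v * k (0 + v) + k v * ext k' (0 + v)))
      (ext k' v * k (0 + v) + k v * ext k' (0 + v)) :=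
    ((hφ.differentiable one_ne_zero) _).hasDerivAt
  have hG : HasDerivAt (fun s => GG k k' φ 0 s)
      (deriv φ (ext k' v * k (0 + v) + k v * ext k' (0 + v)) *
        (k'' v * 2 * k (0 + v) + ext k' v * (k' (0 + v) * 2) +
          (k' v * 2 * ext k' (0 + v) + k v * (k'' (0 + v) * 2)))) t := by
    simp only [GG, gg]
    exact hφd.comp t harg
  have hlin : HasDerivAt (fun s : ℝ => 1 - 2*s) (-2) t := by
    have h := ((hasDerivAt_id t).const_mul (2:ℝ)).const_sub 1
    exact h.congr_deriv (by ring)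
  have hfull := (hlin.mul hG).const_mul (1/4 : ℝ)
  refine hfull.congr_deriv ?_
  have e1 : ext k' v = k' v := ext_eq k' (Ioo_subset_Icc_self hv)
  have e3 : ext k'' v = k'' v := ext_eq k'' (Ioo_subset_Icc_self hv)
  simp only [DD, GG, gg, ← hvdef, zero_add, e1, e3]
  ring

lemma DR_zero (hk_cont : Continuous k) (hk'_cont : ContinuousOn k' (Icc (-1:ℝ) 1))
    (hk''_cont : ContinuousOn k'' (Icc (-1:ℝ) 1))
    (hφ : ContDiff ℝ 1 φ) (hφ0 : φ 0 = 0)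
    (hk'_deriv : ∀ v ∈ Set.Ioo (-1 : ℝ) 1, HasDerivAt k (k' v) v)
    (hk''_deriv : ∀ v ∈ Set.Ioo (-1 : ℝ) 1, HasDerivAt k' (k'' v) v)
    (hk1 : k 1 = 0) (hkm1 : k (-1) = 0) :
    DR k k' k'' φ 0 = 0 := by
  have hGu : ∀ x : ℝ, Continuous (fun t => GG k k' φ x t) :=
    fun x => (cont_GG hk_cont hk'_cont hφ).comp (continuous_const.prodMk continuous_id)
  have hDu : ∀ x : ℝ, Continuous (fun t => DD k k' k'' φ x t) :=
    fun x => (cont_DD hk_cont hk'_cont hk''_cont hφ).comp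
      (continuous_const.prodMk continuous_id)
  have hint1 : IntervalIntegrable (fun t => DD k k' k'' φ 0 t) volume 0 1 :=
    (hDu 0).intervalIntegrable 0 1
  have hint2 : IntervalIntegrable (fun t => GG k k' φ 0 t / 2) volume 0 1 :=
    ((hGu 0).div_const 2).intervalIntegrable 0 1
  have hG01 : GG k k' φ 0 1 = 0 := by
    have : vv 0 1 = 1 := by rw [vv]; ring
    rw [GG, this, gg]
    norm_num [hk1, hφ0]
  have hG00 : GG k k' φ 0 0 = 0 := by
    have : vv 0 0 = -1 := by rw [vv]; ring
    rw [GG, this, gg]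
    norm_num [hkm1, hφ0]
  have hcontf : ContinuousOn (fun s => (1/4 : ℝ) * ((1 - 2*s) * GG k k' φ 0 s)) (Icc 0 1) := by
    have h0 := hGu 0
    exact (continuous_const.mul (((continuous_const.sub
      (continuous_const.mul continuous_id)).mul h0))).continuousOn
  have key : ∫ t in (0:ℝ)..1, (DD k k' k'' φ 0 t - GG k k' φ 0 t / 2) =
      (fun s => (1/4 : ℝ) * ((1 - 2*s) * GG k k' φ 0 s)) 1 -
      (fun s => (1/4 : ℝ) * ((1 - 2*s) * GG k k' φ 0 s)) 0 := by
    refine intervalIntegral.integral_eq_sub_of_hasDeriv_right_of_le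
      (f := fun s => (1/4 : ℝ) * ((1 - 2*s) * GG k k' φ 0 s))
      (f' := fun t => DD k k' k'' φ 0 t - GG k k' φ 0 t / 2)
      zero_le_one hcontf (fun t ht => ?_) (hint1.sub hint2)
    exact (deriv_GG0 hφ hk'_deriv hk''_deriv ht).hasDerivWithinAt
  rw [intervalIntegral.integral_sub hint1 hint2] at key
  simp only [hG01, hG00] at key
  have hDS0 : DS k k' k'' φ 0 = SS k k' φ 0 / 2 := by
    have h2 : ∫ t in (0:ℝ)..1, GG k k' φ 0 t / 2 = (∫ t in (0:ℝ)..1, GG k k' φ 0 t) / 2 :=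
      intervalIntegral.integral_div 2 _
    rw [DS, SS, ← h2]
    have := key
    norm_num at this ⊢
    linarith
  rw [DR, hDS0]
  ring

lemma DR_two (hφ0 : φ 0 = 0) (hk1 : k 1 = 0) (hkm1 : k (-1) = 0) :
    DR k k' k'' φ 2 = 0 := by
  have hG2 : ∀ t : ℝ, GG k k' φ 2 t = 0 := by
    intro t
    have : vv 2 t = -1 := by rw [vv]; ring
    rw [GG, this, gg]
    norm_num [hk1, hkm1, hφ0]
  have hSS2 : SS k k' φ 2 = 0 := by
    rw [SS]
    simp [hG2]
  rw [DR, hSS2]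
  ring

lemma T_eq (hT : T = fun u => ∫ v in Set.Icc (-1 : ℝ) 1,
      (if -1 ≤ u + v ∧ u + v ≤ 1 then φ (k' v * k (u + v) + k v * k' (u + v)) else 0))
    {u : ℝ} (hu : u ∈ Icc (0:ℝ) 2) : T u = (2 - u) * SS k k' φ u := by
  obtain ⟨hu0, hu2⟩ := hu
  have step1 : T u = ∫ v in Icc (-1:ℝ) 1, (Icc (-1:ℝ) (1-u)).indicator (gg k k' φ u) v := by
    rw [hT]
    refine setIntegral_congr_fun measurableSet_Icc (fun v hv => ?_)
    by_cases h : u + v ≤ 1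
    · have hcond : -1 ≤ u + v ∧ u + v ≤ 1 := ⟨by linarith [hv.1], h⟩
      have hmem : v ∈ Icc (-1:ℝ) (1-u) := ⟨hv.1, by linarith⟩
      have hind : (Icc (-1:ℝ) (1-u)).indicator (gg k k' φ u) v = gg k k' φ u v :=
        indicator_of_mem hmem _
      rw [if_pos hcond, hind, gg, ext_eq k' hv, ext_eq k' ⟨hcond.1, hcond.2⟩]
    · have hnmem : v ∉ Icc (-1:ℝ) (1-u) := fun hmem => h (by linarith [hmem.2])
      have hind : (Icc (-1:ℝ) (1-u)).indicator (gg k k' φ u) v = 0 :=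
        indicator_of_notMem hnmem _
      rw [if_neg (fun hc => h hc.2), hind]
  have step2 : T u = ∫ v in Icc (-1:ℝ) 1 ∩ Icc (-1:ℝ) (1-u), gg k k' φ u v := by
    rw [step1, setIntegral_indicator measurableSet_Icc]
  have step3 : Icc (-1:ℝ) 1 ∩ Icc (-1:ℝ) (1-u) = Icc (-1:ℝ) (1-u) := by
    rw [Icc_inter_Icc, max_self, min_eq_right (by linarith : (1:ℝ) - u ≤ 1)]
  have step4 : T u = ∫ v in (-1:ℝ)..(1-u), gg k k' φ u v := by
    rw [step2, step3, intervalIntegral.integral_of_le (by linarith : (-1:ℝ) ≤ 1 - u),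
      integral_Icc_eq_integral_Ioc]
  rw [step4]
  have hsub := intervalIntegral.smul_integral_comp_add_mul (a := 0) (b := 1)
    (gg k k' φ u) (2 - u) (-1)
  have he1 : (-1 : ℝ) + (2-u) * 0 = -1 := by ring
  have he2 : (-1 : ℝ) + (2-u) * 1 = 1 - u := by ring
  rw [he1, he2] at hsub
  rw [← hsub, smul_eq_mul]
  rfl

lemma T_zero (hT : T = fun u => ∫ v in Set.Icc (-1 : ℝ) 1,
      (if -1 ≤ u + v ∧ u + v ≤ 1 then φ (k' v * k (u + v) + k v * k' (u + v)) else 0))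
    {u : ℝ} (hu : 2 < u) : T u = 0 := by
  simp only [hT]
  have h : EqOn (fun v => if -1 ≤ u + v ∧ u + v ≤ 1 then
      φ (k' v * k (u + v) + k v * k' (u + v)) else 0) (fun _ => (0:ℝ)) (Icc (-1:ℝ) 1) := by
    intro v hv
    simp only
    rw [if_neg (fun hc => by linarith [hv.1, hc.2])]
  rw [setIntegral_congr_fun measurableSet_Icc h]
  simp

lemma half (hk_cont : Continuous k)
    (hk_supp : ∀ v, k v ≠ 0 → v ∈ Set.Icc (-1 : ℝ) 1)
    (hk'_deriv : ∀ v ∈ Set.Ioo (-1 : ℝ) 1, HasDerivAt k (k' v) v)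
    (hk''_deriv : ∀ v ∈ Set.Ioo (-1 : ℝ) 1, HasDerivAt k' (k'' v) v)
    (hk'_cont : ContinuousOn k' (Set.Icc (-1 : ℝ) 1))
    (hk''_cont : ContinuousOn k'' (Set.Icc (-1 : ℝ) 1))
    (hφ : ContDiff ℝ 1 φ) (hφ0 : φ 0 = 0)
    (hT : T = fun u => ∫ v in Set.Icc (-1 : ℝ) 1,
      (if -1 ≤ u + v ∧ u + v ≤ 1 then φ (k' v * k (u + v) + k v * k' (u + v)) else 0)) :
    ContinuousOn T (Ici 0) ∧ (∀ u, 2 < u → T u = 0) ∧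
      Continuous (DR k k' k'' φ) ∧
      (∀ u ∈ Ioo (0:ℝ) 2, HasDerivAt T (DR k k' k'' φ u) u) ∧
      DR k k' k'' φ 0 = 0 ∧ DR k k' k'' φ 2 = 0 := by
  have hk1 : k 1 = 0 := by
    by_contra h
    have h2 : ∀ᶠ x in 𝓝[>] (1:ℝ), k x = 0 := by
      filter_upwards [self_mem_nhdsWithin] with x hx
      by_contra hk
      have := hk_supp x hk
      exact absurd this.2 (not_le.2 hx)
    have h3 : Tendsto k (𝓝[>] (1:ℝ)) (𝓝 (k 1)) :=
      (hk_cont.tendsto 1).mono_left nhdsWithin_le_nhds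
    have h4 : Tendsto k (𝓝[>] (1:ℝ)) (𝓝 0) :=
      Tendsto.congr' (h2.mono fun x hx => hx.symm) tendsto_const_nhds
    exact h (tendsto_nhds_unique h3 h4)
  have hkm1 : k (-1) = 0 := by
    by_contra h
    have h2 : ∀ᶠ x in 𝓝[<] (-1:ℝ), k x = 0 := by
      filter_upwards [self_mem_nhdsWithin] with x hx
      by_contra hk
      have := hk_supp x hk
      exact absurd this.1 (not_le.2 hx)
    have h3 : Tendsto k (𝓝[<] (-1:ℝ)) (𝓝 (k (-1))) :=
      (hk_cont.tendsto (-1)).mono_left nhdsWithin_le_nhds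
    have h4 : Tendsto k (𝓝[<] (-1:ℝ)) (𝓝 0) :=
      Tendsto.congr' (h2.mono fun x hx => hx.symm) tendsto_const_nhds
    exact h (tendsto_nhds_unique h3 h4)
  refine ⟨?_, fun u hu => T_zero hT hu, cont_DR hk_cont hk'_cont hk''_cont hφ, ?_, ?_, ?_⟩
  · -- ContinuousOn T (Ici 0)
    have hcm : Continuous (fun u : ℝ => max (2 - u) 0 * SS k k' φ u) :=
      ((continuous_const.sub continuous_id).max continuous_const).mul
        (cont_SS hk_cont hk'_cont hφ)
    refine hcm.continuousOn.congr (fun u hu => ?_)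
    rcases le_or_gt u 2 with h2 | h2
    · beta_reduce; rw [T_eq hT ⟨hu, h2⟩, max_eq_left (by linarith)]
    · beta_reduce; rw [T_zero hT h2, max_eq_right (by linarith), zero_mul]
  · -- derivative on Ioo 0 2
    intro u₀ hu₀
    have hS := hasDerivAt_SS hk_cont hk'_cont hk''_cont hφ hk'_deriv hk''_deriv hu₀
    have hprod : HasDerivAt (fun u => (2-u) * SS k k' φ u)
        ((-1) * SS k k' φ u₀ + (2-u₀) * DS k k' k'' φ u₀) u₀ :=
      (((hasDerivAt_id u₀).const_sub 2)).mul hS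
    have heq : T =ᶠ[𝓝 u₀] fun u => (2-u) * SS k k' φ u := by
      filter_upwards [isOpen_Ioo.mem_nhds hu₀] with y hy
      exact T_eq hT (Ioo_subset_Icc_self hy)
    have hD := hprod.congr_of_eventuallyEq heq
    refine hD.congr_deriv ?_
    rw [DR]
    ring
  · exact DR_zero hk_cont hk'_cont hk''_cont hφ hφ0 hk'_deriv hk''_deriv hk1 hkm1
  · exact DR_two hφ0 hk1 hkm1

end Core

lemma reflect (k k' φ T : ℝ → ℝ)
    (hT : T = fun u => ∫ v in Set.Icc (-1 : ℝ) 1,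
      (if -1 ≤ u + v ∧ u + v ≤ 1 then φ (k' v * k (u + v) + k v * k' (u + v)) else 0)) :
    (fun u => T (-u)) = fun u => ∫ v in Set.Icc (-1 : ℝ) 1,
      (if -1 ≤ u + v ∧ u + v ≤ 1 then
        (fun x => φ (-x)) ((fun x => -k' (-x)) v * (fun x => k (-x)) (u + v) +
          (fun x => k (-x)) v * (fun x => -k' (-x)) (u + v)) else 0) := by
  funext u
  simp only [hT]
  have e1 : ∀ (f : ℝ → ℝ), ∫ v in Icc (-1:ℝ) 1, f v = ∫ v in (-1:ℝ)..1, f v := fun f => by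
    rw [intervalIntegral.integral_of_le (by norm_num : (-1:ℝ) ≤ 1), integral_Icc_eq_integral_Ioc]
  rw [e1, e1]
  have hR : ∀ v : ℝ,
      (if -1 ≤ -u + v ∧ -u + v ≤ 1 then φ (k' v * k (-u + v) + k v * k' (-u + v)) else 0) =
      (fun w => if -1 ≤ u + w ∧ u + w ≤ 1 then
        φ (-((-k' (-w)) * k (-(u + w)) + k (-w) * (-k' (-(u + w))))) else 0) (-v) := by
    intro v
    simp only [neg_neg]
    have harg : -(u + -v) = -u + v := by ring
    rw [harg]
    refine if_congr ?_ ?_ rfl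
    · constructor <;> rintro ⟨a, b⟩ <;> constructor <;> linarith
    · congr 1
      ring
  set BIG : ℝ → ℝ := fun w => if -1 ≤ u + w ∧ u + w ≤ 1 then
      φ (-((-k' (-w)) * k (-(u + w)) + k (-w) * (-k' (-(u + w))))) else 0 with hBIG
  have h1 : (∫ v in (-1:ℝ)..1,
        (if -1 ≤ -u + v ∧ -u + v ≤ 1 then φ (k' v * k (-u + v) + k v * k' (-u + v)) else 0)) =
      ∫ v in (-1:ℝ)..1, BIG (-v) :=
    intervalIntegral.integral_congr (fun v _ => hR v)
  have h2 : (∫ v in (-1:ℝ)..1, BIG (-v)) = ∫ v in (-(1:ℝ))..(-(-1:ℝ)), BIG v :=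
    intervalIntegral.integral_comp_neg BIG
  rw [h1, h2]
  norm_num

end Stmt5Aux

open Stmt5Aux in
theorem stmt5 (k k' k'' φ : ℝ → ℝ)
    (hk_cont : Continuous k)
    (hk_supp : ∀ v, k v ≠ 0 → v ∈ Set.Icc (-1 : ℝ) 1)
    (hk'_deriv : ∀ v ∈ Set.Ioo (-1 : ℝ) 1, HasDerivAt k (k' v) v)
    (hk''_deriv : ∀ v ∈ Set.Ioo (-1 : ℝ) 1, HasDerivAt k' (k'' v) v)
    (hk'_cont : ContinuousOn k' (Set.Icc (-1 : ℝ) 1))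
    (hk''_cont : ContinuousOn k'' (Set.Icc (-1 : ℝ) 1))
    (hφ : ContDiff ℝ 1 φ) (hφ0 : φ 0 = 0)
    (T : ℝ → ℝ)
    (hT : T = fun u => ∫ v in Set.Icc (-1 : ℝ) 1,
        (if -1 ≤ u + v ∧ u + v ≤ 1 then φ (k' v * k (u + v) + k v * k' (u + v)) else 0)) :
    Continuous T ∧ (∀ u, T u ≠ 0 → u ∈ Set.Icc (-2 : ℝ) 2) ∧
      ∃ T' : ℝ → ℝ, ContinuousOn T' (Set.Icc (-2 : ℝ) 2) ∧
        (∀ u ∈ Set.Ioo (-2 : ℝ) 2, HasDerivAt T (T' u) u) ∧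
        T' (-2) = 0 ∧ T' 2 = 0 := by
  obtain ⟨hcontR, hzeroR, hcontDR, hderivR, hDR0, hDR2⟩ :=
    half hk_cont hk_supp hk'_deriv hk''_deriv hk'_cont hk''_cont hφ hφ0 hT
  -- reflected data
  have hmio : ∀ v : ℝ, v ∈ Ioo (-1:ℝ) 1 → -v ∈ Ioo (-1:ℝ) 1 := by
    intro v hv; exact ⟨by linarith [hv.2], by linarith [hv.1]⟩
  have h1 : Continuous (fun x => k (-x)) := hk_cont.comp continuous_neg
  have h2 : ∀ v, k (-v) ≠ 0 → v ∈ Set.Icc (-1 : ℝ) 1 := by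
    intro v hv
    have := hk_supp (-v) hv
    exact ⟨by linarith [this.2], by linarith [this.1]⟩
  have h3 : ∀ v ∈ Set.Ioo (-1 : ℝ) 1, HasDerivAt (fun x => k (-x)) (-k' (-v)) v := by
    intro v hv
    have hd := (hk'_deriv (-v) (hmio v hv)).comp v (hasDerivAt_neg v)
    exact hd.congr_deriv (by ring)
  have h4 : ∀ v ∈ Set.Ioo (-1 : ℝ) 1, HasDerivAt (fun x => -k' (-x)) (k'' (-v)) v := by
    intro v hv
    have hd := ((hk''_deriv (-v) (hmio v hv)).comp v (hasDerivAt_neg v)).neg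
    exact hd.congr_deriv (by ring)
  have hmic : MapsTo (fun x : ℝ => -x) (Icc (-1:ℝ) 1) (Icc (-1:ℝ) 1) := fun x hx =>
    (show -x ∈ Icc (-1:ℝ) 1 from ⟨by linarith [hx.2], by linarith [hx.1]⟩)
  have h5 : ContinuousOn (fun x => -k' (-x)) (Set.Icc (-1 : ℝ) 1) :=
    (hk'_cont.comp continuous_neg.continuousOn hmic).neg
  have h6 : ContinuousOn (fun x => k'' (-x)) (Set.Icc (-1 : ℝ) 1) :=
    hk''_cont.comp continuous_neg.continuousOn hmic
  have h7 : ContDiff ℝ 1 (fun x => φ (-x)) := hφ.comp (contDiff_id.neg)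
  have h8 : (fun x => φ (-x)) 0 = 0 := by simp [hφ0]
  obtain ⟨hcontL, hzeroL, hcontDL, hderivL, hDL0, hDL2⟩ :=
    half (k := fun x => k (-x)) (k' := fun x => -k' (-x)) (k'' := fun x => k'' (-x))
      (φ := fun x => φ (-x)) (T := fun u => T (-u))
      h1 h2 h3 h4 h5 h6 h7 h8 (reflect k k' φ T hT)
  have hIic : ContinuousOn T (Iic 0) := by
    have h := hcontL.comp continuous_neg.continuousOn
      (fun x (hx : x ∈ Iic (0:ℝ)) => Set.mem_Ici.2 (neg_nonneg.2 (Set.mem_Iic.1 hx)))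
    have he : ((fun u => T (-u)) ∘ fun x : ℝ => -x) = T := by
      funext x; simp [Function.comp]
    rwa [he] at h
  have hcontT : Continuous T := by
    refine continuous_iff_continuousAt.2 fun x => ?_
    rcases lt_trichotomy x 0 with h | h | h
    · exact (hIic x (le_of_lt h)).continuousAt (Iic_mem_nhds h)
    · subst h
      exact continuousAt_iff_continuous_left_right.2
        ⟨hIic 0 Set.self_mem_Iic, hcontR 0 Set.self_mem_Ici⟩
    · exact (hcontR x (le_of_lt h)).continuousAt (Ici_mem_nhds h)
  have hTzero_left : ∀ u : ℝ, u < -2 → T u = 0 := by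
    intro u hu
    have := hzeroL (-u) (by linarith)
    simpa using this
  -- the left derivative
  have hL : ∀ y ∈ Ioo (-2:ℝ) 0, HasDerivAt T
      (-(DR (fun x => k (-x)) (fun x => -k' (-x)) (fun x => k'' (-x)) (fun x => φ (-x)) (-y))) y := by
    intro y hy
    have hmem : -y ∈ Ioo (0:ℝ) 2 := ⟨by linarith [hy.2], by linarith [hy.1]⟩
    have hA := (hderivL (-y) hmem).comp y (hasDerivAt_neg y)
    have he : ((fun u => T (-u)) ∘ fun x : ℝ => -x) = T := by
      funext x; simp [Function.comp]
    rw [he] at hA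
    exact hA.congr_deriv (by ring)
  have hT'cont : Continuous (fun u : ℝ => if u ≤ 0 then
      -(DR (fun x => k (-x)) (fun x => -k' (-x)) (fun x => k'' (-x)) (fun x => φ (-x)) (-u))
      else DR k k' k'' φ u) := by
    refine Continuous.if_le ?_ hcontDR continuous_id continuous_const ?_
    · exact (hcontDL.comp continuous_neg).neg
    · intro x hx
      subst hx
      simp [hDL0, hDR0]
  have hderivAll : ∀ u ∈ Ioo (-2:ℝ) 2, HasDerivAt T (if u ≤ 0 then
      -(DR (fun x => k (-x)) (fun x => -k' (-x)) (fun x => k'' (-x)) (fun x => φ (-x)) (-u))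
      else DR k k' k'' φ u) u := by
    intro u hu
    rcases lt_trichotomy u 0 with h | h | h
    · rw [if_pos (le_of_lt h)]
      exact hL u ⟨hu.1, h⟩
    · subst h
      rw [if_pos le_rfl]
      have hT'0 : -(DR (fun x => k (-x)) (fun x => -k' (-x)) (fun x => k'' (-x))
          (fun x => φ (-x)) (-0)) = 0 := by
        rw [neg_zero, hDL0, neg_zero]
      rw [hT'0]
      have hA : HasDerivWithinAt T 0 (Ici 0) 0 := by
        apply hasDerivWithinAt_Ici_of_tendsto_deriv (s := Ioo (0:ℝ) 2)
        · exact fun y hy => ((hderivR y hy).differentiableAt).differentiableWithinAt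
        · exact (hcontR 0 Set.self_mem_Ici).mono (fun x hx => le_of_lt hx.1)
        · exact Ioo_mem_nhdsGT_of_mem ⟨le_rfl, by norm_num⟩
        · have hmem : Ioo (0:ℝ) 2 ∈ 𝓝[>] (0:ℝ) := Ioo_mem_nhdsGT_of_mem ⟨le_rfl, by norm_num⟩
          have heq : deriv T =ᶠ[𝓝[>] (0:ℝ)] DR k k' k'' φ := by
            filter_upwards [hmem] with y hy
            exact (hderivR y hy).deriv
          have htd : Tendsto (DR k k' k'' φ) (𝓝[>] (0:ℝ)) (𝓝 0) := by
            have := (hcontDR.tendsto 0).mono_left (nhdsWithin_le_nhds (s := Ioi (0:ℝ)))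
            rwa [hDR0] at this
          exact htd.congr' heq.symm
      have hB : HasDerivWithinAt T 0 (Iic 0) 0 := by
        apply hasDerivWithinAt_Iic_of_tendsto_deriv (s := Ioo (-2:ℝ) 0)
        · exact fun y hy => ((hL y hy).differentiableAt).differentiableWithinAt
        · exact (hIic 0 Set.self_mem_Iic).mono (fun x hx => le_of_lt hx.2)
        · exact Ioo_mem_nhdsLT_of_mem ⟨by norm_num, le_rfl⟩
        · have hmem : Ioo (-2:ℝ) 0 ∈ 𝓝[<] (0:ℝ) := Ioo_mem_nhdsLT_of_mem ⟨by norm_num, le_rfl⟩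
          have heq : deriv T =ᶠ[𝓝[<] (0:ℝ)] (fun y =>
              -(DR (fun x => k (-x)) (fun x => -k' (-x)) (fun x => k'' (-x))
                (fun x => φ (-x)) (-y))) := by
            filter_upwards [hmem] with y hy
            exact (hL y hy).deriv
          have hcc : Continuous (fun y : ℝ =>
              -(DR (fun x => k (-x)) (fun x => -k' (-x)) (fun x => k'' (-x))
                (fun x => φ (-x)) (-y))) := (hcontDL.comp continuous_neg).neg
          have htd : Tendsto (fun y : ℝ =>
              -(DR (fun x => k (-x)) (fun x => -k' (-x)) (fun x => k'' (-x))
                (fun x => φ (-x)) (-y))) (𝓝[<] (0:ℝ)) (𝓝 0) := by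
            have := (hcc.tendsto 0).mono_left (nhdsWithin_le_nhds (s := Iio (0:ℝ)))
            simpa [hDL0] using this
          exact htd.congr' heq.symm
      have hU := hB.union hA
      rw [Iic_union_Ici] at hU
      exact hU.hasDerivAt (by simp)
    · rw [if_neg (not_le.2 h)]
      exact hderivR u ⟨h, hu.2⟩
  have hm2 : (if (-2:ℝ) ≤ 0 then
      -(DR (fun x => k (-x)) (fun x => -k' (-x)) (fun x => k'' (-x)) (fun x => φ (-x)) (-(-2)))
      else DR k k' k'' φ (-2)) = 0 := by
    rw [if_pos (by norm_num : (-2:ℝ) ≤ 0)]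
    norm_num [hDL2]
  have hp2 : (if (2:ℝ) ≤ 0 then
      -(DR (fun x => k (-x)) (fun x => -k' (-x)) (fun x => k'' (-x)) (fun x => φ (-x)) (-2))
      else DR k k' k'' φ 2) = 0 := by
    rw [if_neg (by norm_num : ¬ (2:ℝ) ≤ 0)]
    exact hDR2
  refine ⟨hcontT, ?_, ?_⟩
  · intro u hu
    by_contra hmem
    rw [Set.mem_Icc] at hmem
    push_neg at hmem
    rcases lt_or_ge u (-2:ℝ) with h | h
    · exact hu (hTzero_left u h)
    · exact hu (hzeroR u (hmem h))
  · exact ⟨fun u => if u ≤ 0 then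
        -(DR (fun x => k (-x)) (fun x => -k' (-x)) (fun x => k'' (-x)) (fun x => φ (-x)) (-u))
      else DR k k' k'' φ u, hT'cont.continuousOn,
      fun u hu => hderivAll u hu, hm2, hp2⟩
end

section
/- Let X ∼ N(0, Σ) on ℝ^q where Σ has rank r with 1 ≤ r < q. Then the law F of X belongs to D(r/q): there is a constant M < ∞ with F(B_∞(X,h)) ≤ M·(2h)^r almost surely for all h ∈ (0,1], and E[liminf_{h↓0} F(B_∞(X,h))/(2h)^r] > 0. -/
open MeasureTheory Metric Set Filter Topology ProbabilityTheory
open Real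
open scoped ENNReal

lemma gauss_pdf_le_one (x : ℝ) : gaussianPDF 0 1 x ≤ 1 := by
  rw [gaussianPDF]
  refine ENNReal.ofReal_le_one.2 ?_
  rw [gaussianPDFReal]
  simp only [NNReal.coe_one, mul_one, sub_zero]
  have h1 : (1:ℝ) ≤ √(2 * π) := by
    rw [Real.le_sqrt' one_pos]
    nlinarith [Real.pi_gt_three]
  have h2 : Real.exp (-x ^ 2 / 2) ≤ 1 := by
    rw [Real.exp_le_one_iff]
    have : (0:ℝ) ≤ x^2 := sq_nonneg _
    nlinarith
  calc (√(2 * π))⁻¹ * Real.exp (-x ^ 2 / 2) ≤ 1 * 1 := by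
        apply mul_le_mul _ h2 (Real.exp_nonneg _) one_pos.le
        rw [inv_le_one_iff₀]; right; exact h1
    _ = 1 := by ring

lemma gauss_ub (a s : ℝ) : gaussianReal 0 1 (closedBall a s) ≤ ENNReal.ofReal (2 * s) := by
  have h : gaussianReal 0 1 ≤ volume := by
    rw [gaussianReal_of_var_ne_zero 0 one_ne_zero]
    calc volume.withDensity (gaussianPDF 0 1) ≤ volume.withDensity 1 :=
          withDensity_mono (ae_of_all _ gauss_pdf_le_one)
      _ = volume := withDensity_one
  calc gaussianReal 0 1 (closedBall a s) ≤ volume (closedBall a s) := h _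
    _ = ENNReal.ofReal (2 * s) := Real.volume_closedBall a s

lemma gauss_lb (a s : ℝ) (hs0 : 0 ≤ s) (hs1 : s ≤ 1) :
    ENNReal.ofReal (gaussianPDFReal 0 1 (|a| + 1) * (2 * s)) ≤
      gaussianReal 0 1 (closedBall a s) := by
  rw [gaussianReal_apply 0 one_ne_zero]
  have hmono : ∀ x ∈ closedBall a s,
      ENNReal.ofReal (gaussianPDFReal 0 1 (|a| + 1)) ≤ gaussianPDF 0 1 x := by
    intro x hx
    rw [gaussianPDF]
    apply ENNReal.ofReal_le_ofReal
    rw [gaussianPDFReal, gaussianPDFReal]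
    apply mul_le_mul_of_nonneg_left _ (by positivity)
    apply Real.exp_le_exp.2
    have hxa : |x - a| ≤ s := by rwa [mem_closedBall, Real.dist_eq] at hx
    have h1 : |x| ≤ |a| + 1 := by
      have := abs_sub_abs_le_abs_sub x a
      linarith
    have h2 : (x - 0)^2 ≤ (|a| + 1 - 0)^2 := by
      simp only [sub_zero]
      rw [← sq_abs x]
      exact pow_le_pow_left₀ (abs_nonneg _) h1 2
    simp only [NNReal.coe_one]
    nlinarith
  calc ENNReal.ofReal (gaussianPDFReal 0 1 (|a| + 1) * (2 * s))
      = ENNReal.ofReal (gaussianPDFReal 0 1 (|a| + 1)) * ENNReal.ofReal (2 * s) := by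
        rw [ENNReal.ofReal_mul (gaussianPDFReal_nonneg 0 1 _)]
    _ = ENNReal.ofReal (gaussianPDFReal 0 1 (|a| + 1)) * volume (closedBall a s) := by
        rw [Real.volume_closedBall]
    _ = ∫⁻ _ in closedBall a s, ENNReal.ofReal (gaussianPDFReal 0 1 (|a| + 1)) := by
        rw [setLIntegral_const, mul_comm]
    _ ≤ ∫⁻ x in closedBall a s, gaussianPDF 0 1 x :=
        setLIntegral_mono' measurableSet_closedBall hmono

lemma pi_gauss_ub (r : ℕ) (y : Fin r → ℝ) (s : ℝ) (hs : 0 ≤ s) :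
    (Measure.pi fun _ : Fin r => gaussianReal 0 1) (closedBall y s) ≤
      ENNReal.ofReal ((2 * s) ^ r) := by
  rw [closedBall_pi y hs, Measure.pi_pi]
  calc (∏ i : Fin r, gaussianReal 0 1 (closedBall (y i) s))
      ≤ ∏ _i : Fin r, ENNReal.ofReal (2 * s) :=
        Finset.prod_le_prod' fun i _ => gauss_ub (y i) s
    _ = ENNReal.ofReal ((2 * s) ^ r) := by
        rw [Finset.prod_const, Finset.card_univ, Fintype.card_fin,
          ← ENNReal.ofReal_pow (by positivity)]

lemma pi_gauss_lb (r : ℕ) (y : Fin r → ℝ) (s : ℝ) (hs0 : 0 ≤ s) (hs1 : s ≤ 1) :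
    ENNReal.ofReal ((∏ i, gaussianPDFReal 0 1 (|y i| + 1)) * (2 * s) ^ r) ≤
      (Measure.pi fun _ : Fin r => gaussianReal 0 1) (closedBall y s) := by
  rw [closedBall_pi y hs0, Measure.pi_pi]
  calc ENNReal.ofReal ((∏ i, gaussianPDFReal 0 1 (|y i| + 1)) * (2 * s) ^ r)
      = ENNReal.ofReal (∏ i : Fin r, gaussianPDFReal 0 1 (|y i| + 1) * (2 * s)) := by
        rw [Finset.prod_mul_distrib, Finset.prod_const, Finset.card_univ, Fintype.card_fin]
    _ = ∏ i : Fin r, ENNReal.ofReal (gaussianPDFReal 0 1 (|y i| + 1) * (2 * s)) :=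
        ENNReal.ofReal_prod_of_nonneg fun i _ =>
          mul_nonneg (gaussianPDFReal_nonneg 0 1 _) (by positivity)
    _ ≤ ∏ i : Fin r, gaussianReal 0 1 (closedBall (y i) s) :=
        Finset.prod_le_prod' fun i _ => gauss_lb (y i) s hs0 hs1

set_option maxHeartbeats 2000000 in
theorem stmt13 (q r : ℕ) (hr : 1 ≤ r) (hrq : r < q)
    (A : Matrix (Fin q) (Fin r) ℝ) (hA : Function.Injective A.mulVec)
    (F : Measure (Fin q → ℝ))
    (hF : F = (Measure.pi fun _ : Fin r => gaussianReal 0 1).map A.mulVec) :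
    (∃ M : ℝ, ∀ h ∈ Set.Ioc (0 : ℝ) 1, ∀ᵐ x ∂F,
        (F (Metric.closedBall x h)).toReal ≤ M * (2 * h) ^ r) ∧
    0 < ∫ x, Filter.liminf
        (fun h : ℝ => (F (Metric.closedBall x h)).toReal / (2 * h) ^ r)
        (𝓝[>] (0 : ℝ)) ∂F := by
  set μ : Measure (Fin r → ℝ) := Measure.pi fun _ : Fin r => gaussianReal 0 1 with hμ
  set L : (Fin r → ℝ) →ₗ[ℝ] (Fin q → ℝ) := A.mulVecLin with hLdef
  have hLa : ∀ v, L v = A.mulVec v := fun v => rfl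
  have hLcont : Continuous L := L.continuous_of_finiteDimensional
  have hmeas : Measurable A.mulVec := by
    have := hLcont.measurable
    exact this
  have hAinj : Function.Injective L := by
    intro a b hab; exact hA (by simpa [hLa] using hab)
  obtain ⟨K, hK0, hK⟩ := (L.injective_iff_antilipschitz).mp hAinj
  set L' := LinearMap.toContinuousLinearMap L with hL'
  set C : ℝ := max ‖L'‖ 1 with hC
  have hC1 : (1:ℝ) ≤ C := le_max_right _ _
  have hC0 : (0:ℝ) < C := lt_of_lt_of_le one_pos hC1
  have hCle : ∀ z : Fin r → ℝ, ‖L z‖ ≤ C * ‖z‖ := fun z =>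
    le_trans (L'.le_opNorm z) (mul_le_mul_of_nonneg_right (le_max_left _ _) (norm_nonneg _))
  haveI : IsProbabilityMeasure F := by rw [hF]; exact Measure.isProbabilityMeasure_map hmeas.aemeasurable
  set M : ℝ := (K:ℝ)^r with hM
  have hM0 : 0 ≤ M := by positivity
  -- density of F at points of the range
  set c : (Fin r → ℝ) → ℝ :=
    fun y => (∏ i, gaussianPDFReal 0 1 (|y i| + 1)) * (1/C)^r with hc
  have hcpos : ∀ y, 0 < c y := by
    intro y
    apply mul_pos _ (by positivity)
    exact Finset.prod_pos fun i _ => gaussianPDFReal_pos _ _ _ one_ne_zero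
  have hFB : ∀ (x : Fin q → ℝ) (h : ℝ),
      F (closedBall x h) = μ (A.mulVec ⁻¹' closedBall x h) := by
    intro x h
    rw [hF, Measure.map_apply hmeas measurableSet_closedBall]
  have key : ∀ (y : Fin r → ℝ), ∀ h ∈ Set.Ioc (0:ℝ) 1,
      (F (closedBall (A.mulVec y) h)).toReal ≤ M * (2*h)^r ∧
      c y * (2*h)^r ≤ (F (closedBall (A.mulVec y) h)).toReal := by
    intro y h hh
    obtain ⟨hh0, hh1⟩ := hh
    constructor
    · apply ENNReal.toReal_le_of_le_ofReal (by positivity)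
      rw [hFB]
      calc μ (A.mulVec ⁻¹' closedBall (A.mulVec y) h) ≤ μ (closedBall y ((K:ℝ)*h)) := by
            apply measure_mono
            intro z hz
            simp only [mem_preimage, mem_closedBall] at hz ⊢
            calc dist z y ≤ (K:ℝ) * dist (L z) (L y) := hK.le_mul_dist z y
              _ ≤ (K:ℝ) * h := by
                  apply mul_le_mul_of_nonneg_left _ (by positivity)
                  simpa [hLa] using hz
        _ ≤ ENNReal.ofReal ((2*((K:ℝ)*h))^r) := pi_gauss_ub r y _ (by positivity)
        _ = ENNReal.ofReal (M * (2*h)^r) := by rw [hM]; ring_nf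
    · rw [hFB]
      apply (ENNReal.ofReal_le_iff_le_toReal (measure_ne_top _ _)).mp
      calc ENNReal.ofReal (c y * (2*h)^r)
          = ENNReal.ofReal ((∏ i, gaussianPDFReal 0 1 (|y i| + 1)) * (2*(h/C))^r) := by
            rw [hc]
            congr 1
            rw [mul_assoc, ← mul_pow]
            congr 2
            field_simp
        _ ≤ μ (closedBall y (h/C)) := pi_gauss_lb r y (h/C) (by positivity)
            (by rw [div_le_one hC0]; linarith)
        _ ≤ μ (A.mulVec ⁻¹' closedBall (A.mulVec y) h) := by
            apply measure_mono
            intro z hz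
            simp only [mem_closedBall] at hz
            simp only [mem_preimage, mem_closedBall]
            rw [← hLa, ← hLa, dist_eq_norm, ← map_sub]
            calc ‖L (z - y)‖ ≤ C * ‖z - y‖ := hCle _
              _ ≤ C * (h/C) := by
                  apply mul_le_mul_of_nonneg_left _ hC0.le
                  rwa [← dist_eq_norm]
              _ = h := by field_simp
  have hrange : ∀ᵐ x ∂F, x ∈ Set.range A.mulVec := by
    have hclosed : IsClosed (Set.range A.mulVec) := by
      have hre : Set.range A.mulVec = (LinearMap.range L : Set (Fin q → ℝ)) := by
        ext x
        simp only [Set.mem_range, SetLike.mem_coe, LinearMap.mem_range, hLa]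
      rw [hre]
      exact Submodule.closed_of_finiteDimensional _
    rw [Filter.eventually_iff, mem_ae_iff]
    have : {x : Fin q → ℝ | x ∈ Set.range A.mulVec}ᶜ = (Set.range A.mulVec)ᶜ := rfl
    rw [this, hF, Measure.map_apply hmeas hclosed.measurableSet.compl]
    have : A.mulVec ⁻¹' (Set.range A.mulVec)ᶜ = ∅ := by
      ext z; simp [Set.mem_preimage]
    rw [this, measure_empty]
  constructor
  · exact ⟨M, fun h hh => hrange.mono fun x ⟨y, hy⟩ => hy ▸ (key y h hh).1⟩
  · -- measurability
    have hAcont : Continuous A.mulVec := hLcont.congr hLa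
    have meas1 : ∀ h : ℝ, Measurable fun x : Fin q → ℝ => (F (closedBall x h)).toReal := by
      intro h
      have hs : MeasurableSet {p : (Fin q → ℝ) × (Fin r → ℝ) | A.mulVec p.2 ∈ closedBall p.1 h} := by
        have hcl : IsClosed {p : (Fin q → ℝ) × (Fin r → ℝ) | dist (A.mulVec p.2) p.1 ≤ h} :=
          isClosed_le (Continuous.dist (hAcont.comp continuous_snd) continuous_fst)
            continuous_const
        simpa [mem_closedBall] using hcl.measurableSet
      have h2 := measurable_measure_prodMk_left (ν := μ) hs
      have heq : (fun x : Fin q → ℝ => (F (closedBall x h)).toReal) =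
          fun x => (μ (Prod.mk x ⁻¹' {p : (Fin q → ℝ) × (Fin r → ℝ) | A.mulVec p.2 ∈ closedBall p.1 h})).toReal := by
        funext x
        rw [hFB]
        rfl
      rw [heq]
      exact h2.ennreal_toReal
    set seq : ℕ → ℝ := fun n => 1/((n:ℝ)+1) with hseq
    set g : (Fin q → ℝ) → ℝ := fun x =>
      liminf (fun n : ℕ => (F (closedBall x (seq n))).toReal / (2*(seq n))^r) atTop with hg
    have hgmeas : Measurable g :=
      Measurable.liminf fun n => (meas1 (seq n)).div_const _
    have hvIoc : ∀ n : ℕ, seq n ∈ Set.Ioc (0:ℝ) 1 := by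
      intro n
      constructor
      · positivity
      · rw [hseq]
        rw [div_le_one (by positivity)]
        linarith [Nat.cast_nonneg (α := ℝ) n]
    have main : ∀ y : Fin r → ℝ,
        c y ≤ liminf (fun h : ℝ =>
            (F (closedBall (A.mulVec y) h)).toReal / (2*h)^r) (𝓝[>] (0:ℝ)) ∧
        liminf (fun h : ℝ =>
            (F (closedBall (A.mulVec y) h)).toReal / (2*h)^r) (𝓝[>] (0:ℝ)) ≤ M ∧
        liminf (fun h : ℝ =>
            (F (closedBall (A.mulVec y) h)).toReal / (2*h)^r) (𝓝[>] (0:ℝ)) = g (A.mulVec y) := by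
      intro y
      set x := A.mulVec y with hx
      set u : ℝ → ℝ := fun h => (F (closedBall x h)).toReal / (2*h)^r with hu
      have hub : ∀ h ∈ Set.Ioc (0:ℝ) 1, c y ≤ u h ∧ u h ≤ M := by
        intro h hh
        have hh0 := hh.1
        have hp : (0:ℝ) < (2*h)^r := by positivity
        obtain ⟨k1, k2⟩ := key y h hh
        exact ⟨(le_div_iff₀ hp).mpr k2, (div_le_iff₀ hp).mpr k1⟩
      have hIoc : Set.Ioc (0:ℝ) 1 ∈ 𝓝[>] (0:ℝ) :=
        mem_of_superset (Ioo_mem_nhdsGT_of_mem ⟨le_refl 0, zero_lt_one⟩) Set.Ioo_subset_Ioc_self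
      have hev : ∀ᶠ h in 𝓝[>] (0:ℝ), c y ≤ u h ∧ u h ≤ M :=
        eventually_of_mem hIoc fun h hh => hub h hh
      have hbdd : IsBoundedUnder (· ≥ ·) (𝓝[>] (0:ℝ)) u :=
        ⟨c y, eventually_map.2 (hev.mono fun h hh => hh.1)⟩
      have hcob : IsCoboundedUnder (· ≥ ·) (𝓝[>] (0:ℝ)) u :=
        IsBoundedUnder.isCoboundedUnder_ge ⟨M, eventually_map.2 (hev.mono fun h hh => hh.2)⟩
      have h1 : c y ≤ liminf u (𝓝[>] (0:ℝ)) :=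
        le_liminf_of_le hcob (hev.mono fun h hh => hh.1)
      have h2 : liminf u (𝓝[>] (0:ℝ)) ≤ M := by
        apply liminf_le_of_le hbdd
        intro b hb
        obtain ⟨h, hbu, _, huM⟩ := (hb.and hev).exists
        exact le_trans hbu huM
      set v : ℕ → ℝ := fun n => u (seq n) with hv
      have hgx : g x = liminf v atTop := rfl
      have hseqt : Tendsto seq atTop (𝓝[>] (0:ℝ)) := by
        apply tendsto_nhdsWithin_of_tendsto_nhds_of_eventually_within
        · exact tendsto_one_div_add_atTop_nhds_zero_nat
        · exact Eventually.of_forall fun n => (hvIoc n).1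
      haveI : (Filter.map seq atTop).NeBot := Filter.NeBot.map atTop_neBot seq
      have hfle : liminf u (𝓝[>] (0:ℝ)) ≤ liminf v atTop := by
        have hvmap : liminf v atTop = liminf u (Filter.map seq atTop) := by
          simp only [Filter.liminf, Filter.map_map]
          rfl
        rw [hvmap]
        exact liminf_le_liminf_of_le hseqt hbdd
          (IsBoundedUnder.isCoboundedUnder_ge
            ⟨M, eventually_map.2 (eventually_map.2
              (Eventually.of_forall fun n => (hub _ (hvIoc n)).2))⟩)
      have hgle : liminf v atTop ≤ liminf u (𝓝[>] (0:ℝ)) := by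
        apply le_of_forall_lt
        intro a ha
        obtain ⟨a', haa', ha'⟩ := exists_between ha
        refine lt_of_lt_of_le haa' ?_
        rcases le_or_gt a' 0 with h0 | h0
        · exact le_trans h0 (le_trans (hcpos y).le h1)
        obtain ⟨a'', ha'a'', ha''⟩ := exists_between ha'
        have hvb : IsBoundedUnder (· ≥ ·) atTop v :=
          ⟨0, eventually_map.2 (Eventually.of_forall fun n =>
            le_trans (hcpos y).le (hub _ (hvIoc n)).1)⟩
        have he1 : ∀ᶠ n in atTop, a'' < v n := eventually_lt_of_lt_liminf ha'' hvb
        have htend : Tendsto (fun n : ℕ => ((n:ℝ)/((n:ℝ)+1))^r) atTop (𝓝 1) := by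
          have ht := (tendsto_natCast_div_add_atTop (1:ℝ)).pow r
          simpa using ht
        have he2 : ∀ᶠ n : ℕ in atTop, a'/a'' < ((n:ℝ)/((n:ℝ)+1))^r := by
          have hq : a'/a'' < 1 := by
            rw [div_lt_one (lt_trans h0 ha'a'')]
            exact ha'a''
          exact htend.eventually (eventually_gt_nhds hq)
        obtain ⟨N, hN⟩ := eventually_atTop.mp (he1.and he2)
        apply le_liminf_of_le hcob
        have hI : Set.Ioo (0:ℝ) (seq N) ∈ 𝓝[>] (0:ℝ) :=
          Ioo_mem_nhdsGT_of_mem ⟨le_refl 0, (hvIoc N).1⟩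
        apply eventually_of_mem hI
        intro h hh
        obtain ⟨hh0, hhN⟩ := hh
        set n := ⌊1/h⌋₊ with hn
        have h1h : (0:ℝ) < 1/h := by positivity
        have hNseq : h * ((N:ℝ)+1) < 1 := by
          rw [hseq] at hhN
          simp only at hhN
          rw [lt_div_iff₀ (by positivity)] at hhN
          linarith
        have hnN : N + 1 ≤ n := by
          rw [hn]
          apply Nat.le_floor
          push_cast
          rw [le_div_iff₀ hh0]
          linarith
        have hn1 : 1 ≤ n := le_trans (Nat.le_add_left 1 N) hnN
        have hn0 : (0:ℝ) < (n:ℝ) := by exact_mod_cast hn1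
        have hfl : (n:ℝ) ≤ 1/h := Nat.floor_le h1h.le
        have hfl2 : 1/h < (n:ℝ) + 1 := by
          have := Nat.lt_floor_add_one (1/h)
          exact_mod_cast this
        have hb1 : seq n < h := by
          rw [hseq]
          simp only
          rw [div_lt_iff₀ (by positivity)]
          rw [div_lt_iff₀ hh0] at hfl2
          linarith
        have hb2 : h * (n:ℝ) ≤ 1 := by
          rw [le_div_iff₀ hh0] at hfl
          linarith
        have hFm : (F (closedBall x (seq n))).toReal ≤ (F (closedBall x h)).toReal :=
          ENNReal.toReal_mono (measure_ne_top _ _)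
            (measure_mono (closedBall_subset_closedBall hb1.le))
        have hvn : a'' < v n := (hN n (by omega)).1
        have htn : a'/a'' < ((n:ℝ)/((n:ℝ)+1))^r := (hN n (by omega)).2
        have hsn0 : (0:ℝ) < seq n := (hvIoc n).1
        have hstep : v n * ((n:ℝ)/((n:ℝ)+1))^r ≤ u h := by
          rw [hv, hu]
          simp only
          rw [div_mul_eq_mul_div, div_le_div_iff₀ (by positivity) (by positivity)]
          calc (F (closedBall x (seq n))).toReal * ((n:ℝ)/((n:ℝ)+1))^r * (2*h)^r
              = (F (closedBall x (seq n))).toReal * (((n:ℝ)/((n:ℝ)+1)) * (2*h))^r := by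
                rw [mul_pow]
                ring
            _ ≤ (F (closedBall x h)).toReal * (2*(seq n))^r := by
                apply mul_le_mul hFm _ (by positivity) ENNReal.toReal_nonneg
                apply pow_le_pow_left₀ (by positivity)
                rw [hseq]
                simp only
                have e1 : (n:ℝ)/((n:ℝ)+1)*(2*h) = ((n:ℝ)*(2*h))/((n:ℝ)+1) := by ring
                have e2 : 2*(1/((n:ℝ)+1)) = 2/((n:ℝ)+1) := by ring
                rw [e1, e2, div_le_div_iff₀ (by positivity) (by positivity)]
                nlinarith
        have ha''0 : (0:ℝ) < a'' := lt_trans h0 ha'a''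
        have haleq : a' ≤ u h := by
          have hlt : a' < v n * ((n:ℝ)/((n:ℝ)+1))^r := by
            calc a' = a'/a'' * a'' := (div_mul_cancel₀ a' (ne_of_gt ha''0)).symm
              _ < ((n:ℝ)/((n:ℝ)+1))^r * v n :=
                mul_lt_mul'' htn hvn (div_pos h0 ha''0).le ha''0.le
              _ = v n * ((n:ℝ)/((n:ℝ)+1))^r := mul_comm _ _
          exact le_trans hlt.le hstep
        exact haleq
      exact ⟨h1, h2, hgx ▸ le_antisymm hfle hgle⟩
    set f : (Fin q → ℝ) → ℝ := fun x =>
      liminf (fun h : ℝ => (F (closedBall x h)).toReal / (2*h)^r) (𝓝[>] (0:ℝ)) with hf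
    have hae : ∀ᵐ x ∂F, 0 < f x ∧ f x ≤ M ∧ f x = g x := by
      apply hrange.mono
      rintro x ⟨y, rfl⟩
      obtain ⟨m1, m2, m3⟩ := main y
      exact ⟨lt_of_lt_of_le (hcpos y) m1, m2, m3⟩
    have hfi : Integrable f F := by
      constructor
      · exact hgmeas.aestronglyMeasurable.congr
          (by filter_upwards [hae] with x hx; exact hx.2.2.symm)
      · apply HasFiniteIntegral.of_bounded (C := M)
        filter_upwards [hae] with x hx
        rw [Real.norm_eq_abs, abs_of_pos hx.1]
        exact hx.2.1
    rw [integral_pos_iff_support_of_nonneg_ae (hae.mono fun x hx => hx.1.le) hfi]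
    have hsupp : ∀ᵐ x ∂F, x ∈ Function.support f := hae.mono fun x hx => ne_of_gt hx.1
    have h0 : F {x | x ∈ Function.support f}ᶜ = 0 := by
      rw [← mem_ae_iff]
      exact hsupp
    have hone : (1:ℝ≥0∞) ≤ F (Function.support f) := by
      have hle := measure_union_le (μ := F) (Function.support f) (Function.support f)ᶜ
      rw [union_compl_self, measure_univ] at hle
      have : F (Function.support f)ᶜ = 0 := h0
      rw [this, add_zero] at hle
      exact hle
    exact lt_of_lt_of_le zero_lt_one hone
end

section
/- Let F be a Borel probability measure on ℝ^q, M ∈ L²(F) nonnegative, and X ∼ F. Suppose lim_{h↓0} E[(F(B_∞(X,h)))³]/(E[F(B_∞(X,h))])² = 0. Then E[M(X)·F(B_∞(X,h))] = o((E[F(B_∞(X,h))])^{3/4}) as h ↓ 0. -/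
open MeasureTheory Metric Set Filter Topology
open scoped ENNReal

/-! Two applications of Cauchy–Schwarz, with `g x = F(closedBall x h)`:
`E[M g] ≤ ‖M‖₂ (E[g²])^{1/2}` and `E[g²] = E[g^{3/2} g^{1/2}] ≤ (E[g³])^{1/2} (E[g])^{1/2}`.
Hence `E[M g] / (E[g])^{3/4} ≤ ‖M‖₂ (E[g³] / (E[g])²)^{1/4}`, which tends to `0`. -/

section CauchySchwarz

variable {α : Type*} [MeasurableSpace α] {μ : Measure α}

theorem integral_mul_le_sqrt_integral_sq_mul_sqrt_integral_sq {f g : α → ℝ}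
    (hf : 0 ≤ᵐ[μ] f) (hg : 0 ≤ᵐ[μ] g) (hf₂ : MemLp f 2 μ) (hg₂ : MemLp g 2 μ) :
    ∫ x, f x * g x ∂μ ≤ √(∫ x, f x ^ 2 ∂μ) * √(∫ x, g x ^ 2 ∂μ) := by
  have h := integral_mul_le_Lp_mul_Lq_of_nonneg Real.HolderConjugate.two_two hf hg
    (by simpa using hf₂) (by simpa using hg₂)
  simpa only [Real.rpow_two, Real.sqrt_eq_rpow, one_div] using h

theorem memLp_two_of_integrable_of_integrable_pow_three {g : α → ℝ} (hg : 0 ≤ᵐ[μ] g)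
    (hg₁ : Integrable g μ) (hg₃ : Integrable (fun x => g x ^ 3) μ) : MemLp g 2 μ := by
  refine (memLp_two_iff_integrable_sq hg₁.aestronglyMeasurable).2 <|
    (hg₁.add hg₃).mono' (hg₁.aestronglyMeasurable.pow 2) ?_
  -- `g² ≤ g + g³` for `g ≥ 0`
  filter_upwards [hg] with x hx
  simp only [Pi.add_apply, Real.norm_of_nonneg (sq_nonneg _)]
  nlinarith [sq_nonneg (g x - 1), mul_nonneg hx (sq_nonneg (g x - 1))]

theorem integral_sq_le_sqrt_integral_pow_three_mul_sqrt_integral {g : α → ℝ} (hg : 0 ≤ᵐ[μ] g)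
    (hg₁ : Integrable g μ) (hg₃ : Integrable (fun x => g x ^ 3) μ) :
    ∫ x, g x ^ 2 ∂μ ≤ √(∫ x, g x ^ 3 ∂μ) * √(∫ x, g x ∂μ) := by
  have hsqrt : AEStronglyMeasurable (fun x => √(g x)) μ :=
    Real.continuous_sqrt.comp_aestronglyMeasurable hg₁.aestronglyMeasurable
  have hsq_sqrt : (fun x => √(g x) ^ 2) =ᵐ[μ] g := by
    filter_upwards [hg] with x hx using Real.sq_sqrt hx
  have hsq_cube : (fun x => (g x * √(g x)) ^ 2) =ᵐ[μ] fun x => g x ^ 3 := by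
    filter_upwards [hsq_sqrt] with x hx
    rw [mul_pow, hx]; ring
  have h := integral_mul_le_sqrt_integral_sq_mul_sqrt_integral_sq (μ := μ)
    (f := fun x => g x * √(g x)) (g := fun x => √(g x))
    (by filter_upwards [hg] with x hx using mul_nonneg hx (Real.sqrt_nonneg _))
    (Eventually.of_forall fun x => Real.sqrt_nonneg _)
    ((memLp_two_iff_integrable_sq (hg₁.aestronglyMeasurable.mul hsqrt)).2
      (hg₃.congr hsq_cube.symm))
    ((memLp_two_iff_integrable_sq hsqrt).2 (hg₁.congr hsq_sqrt.symm))
  have hprod : (fun x => g x * √(g x) * √(g x)) =ᵐ[μ] fun x => g x ^ 2 := by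
    filter_upwards [hsq_sqrt] with x hx
    rw [mul_assoc, ← sq, hx, sq]
  rwa [integral_congr_ae hsq_cube, integral_congr_ae hsq_sqrt, integral_congr_ae hprod] at h

theorem integral_mul_le_of_integrable_pow_three {f g : α → ℝ} (hf : 0 ≤ᵐ[μ] f)
    (hf₂ : MemLp f 2 μ) (hg : 0 ≤ᵐ[μ] g) (hg₁ : Integrable g μ)
    (hg₃ : Integrable (fun x => g x ^ 3) μ) :
    ∫ x, f x * g x ∂μ ≤
      √(∫ x, f x ^ 2 ∂μ) * ((∫ x, g x ^ 3 ∂μ) * ∫ x, g x ∂μ) ^ (1 / 4 : ℝ) := by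
  have hT : 0 ≤ ∫ x, g x ^ 3 ∂μ := integral_nonneg_of_ae <| hg.mono fun x hx => pow_nonneg hx 3
  have hG : 0 ≤ ∫ x, g x ∂μ := integral_nonneg_of_ae hg
  have hquarter : √(√(∫ x, g x ^ 3 ∂μ) * √(∫ x, g x ∂μ)) =
      ((∫ x, g x ^ 3 ∂μ) * ∫ x, g x ∂μ) ^ (1 / 4 : ℝ) := by
    rw [← Real.sqrt_mul hT, Real.sqrt_eq_rpow, Real.sqrt_eq_rpow, ← Real.rpow_mul (by positivity)]
    norm_num
  calc ∫ x, f x * g x ∂μ ≤ √(∫ x, f x ^ 2 ∂μ) * √(∫ x, g x ^ 2 ∂μ) :=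
        integral_mul_le_sqrt_integral_sq_mul_sqrt_integral_sq hf hg hf₂
          (memLp_two_of_integrable_of_integrable_pow_three hg hg₁ hg₃)
    _ ≤ √(∫ x, f x ^ 2 ∂μ) * √(√(∫ x, g x ^ 3 ∂μ) * √(∫ x, g x ∂μ)) := by
        gcongr
        exact integral_sq_le_sqrt_integral_pow_three_mul_sqrt_integral hg hg₁ hg₃
    _ = _ := by rw [hquarter]

end CauchySchwarz

theorem div_rpow_three_quarters_le {N A T G : ℝ} (hT : 0 ≤ T) (hG : 0 ≤ G)
    (hN : N ≤ A * (T * G) ^ (1 / 4 : ℝ)) :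
    N / G ^ (3 / 4 : ℝ) ≤ A * (T / G ^ 2) ^ (1 / 4 : ℝ) := by
  rcases hG.eq_or_lt with rfl | hG
  · simp
  have hG' : G ^ (3 / 4 : ℝ) = (G ^ 3) ^ (1 / 4 : ℝ) := by
    rw [← Real.rpow_natCast, ← Real.rpow_mul hG.le]; norm_num
  rw [div_le_iff₀ (by positivity), mul_assoc, hG', ← Real.mul_rpow (by positivity) (by positivity),
    div_mul_eq_mul_div, mul_div_assoc, show G ^ 3 / G ^ 2 = G by field_simp]
  exact hN

section BallMass

variable {α : Type*} [PseudoMetricSpace α] [MeasurableSpace α] [OpensMeasurableSpace α]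
  [SecondCountableTopology α]

theorem measurable_measure_closedBall (μ : Measure α) [SFinite μ] (r : ℝ) :
    Measurable fun x => μ (closedBall x r) := by
  have hs : MeasurableSet {p : α × α | dist p.2 p.1 ≤ r} :=
    measurableSet_le (by fun_prop) measurable_const
  exact measurable_measure_prodMk_left hs

theorem integrable_measure_closedBall_toReal_pow (μ : Measure α) [IsProbabilityMeasure μ] (r : ℝ)
    (n : ℕ) : Integrable (fun x => (μ (closedBall x r)).toReal ^ n) μ := by
  refine Integrable.of_bound (C := 1)
    ((measurable_measure_closedBall μ r).ennreal_toReal.pow_const n).aestronglyMeasurable ?_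
  refine Eventually.of_forall fun x => ?_
  rw [Real.norm_of_nonneg (by positivity)]
  exact pow_le_one₀ ENNReal.toReal_nonneg
    (ENNReal.toReal_le_of_le_ofReal zero_le_one (by simpa using prob_le_one))

end BallMass

theorem stmt15 (q : ℕ) (F : Measure (Fin q → ℝ)) [IsProbabilityMeasure F]
    (M : (Fin q → ℝ) → ℝ) (hM_nonneg : ∀ x, 0 ≤ M x)
    (hM_L2 : MemLp M 2 F)
    (hratio : Tendsto (fun h : ℝ =>
        (∫ x, ((F (Metric.closedBall x h)).toReal) ^ 3 ∂F) /
          (∫ x, (F (Metric.closedBall x h)).toReal ∂F) ^ 2)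
      (𝓝[>] (0 : ℝ)) (𝓝 0)) :
    Tendsto (fun h : ℝ =>
        (∫ x, M x * (F (Metric.closedBall x h)).toReal ∂F) /
          (∫ x, (F (Metric.closedBall x h)).toReal ∂F) ^ ((3 : ℝ) / 4))
      (𝓝[>] (0 : ℝ)) (𝓝 0) := by
  have hbound : ∀ h : ℝ,
      (∫ x, M x * (F (closedBall x h)).toReal ∂F) /
          (∫ x, (F (closedBall x h)).toReal ∂F) ^ ((3 : ℝ) / 4) ≤
        √(∫ x, M x ^ 2 ∂F) * ((∫ x, (F (closedBall x h)).toReal ^ 3 ∂F) /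
          (∫ x, (F (closedBall x h)).toReal ∂F) ^ 2) ^ (1 / 4 : ℝ) := fun h =>
    div_rpow_three_quarters_le (integral_nonneg fun _ => by positivity)
      (integral_nonneg fun _ => ENNReal.toReal_nonneg)
      (integral_mul_le_of_integrable_pow_three (Eventually.of_forall hM_nonneg) hM_L2
        (Eventually.of_forall fun _ => ENNReal.toReal_nonneg)
        (by simpa using integrable_measure_closedBall_toReal_pow F h 1)
        (integrable_measure_closedBall_toReal_pow F h 3))
  have hlim := (hratio.rpow_const (p := 1 / 4) (Or.inr (by norm_num))).const_mul
    √(∫ x, M x ^ 2 ∂F)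
  rw [Real.zero_rpow (by norm_num), mul_zero] at hlim
  refine squeeze_zero (fun h => div_nonneg ?_ ?_) hbound hlim
  · exact integral_nonneg fun x => mul_nonneg (hM_nonneg x) ENNReal.toReal_nonneg
  · exact Real.rpow_nonneg (integral_nonneg fun _ => ENNReal.toReal_nonneg) _
end

section
/- Let F be a Borel probability measure on ℝ^q with bounded Lebesgue density f, and let μ ∈ L²(F) be nonnegative. Define the cube maximal function (Mμ)(x) = sup_{h>0} Ω_μ(x,h)/F(B_∞(x,h)) for x in the support of F (where Ω_μ(x,h) = ∫_{B_∞(x,h)} μ dF). Then lim_{h↓0} h^{−q} E[μ(X)·Ω_μ(X,h)] = 2^q · E[μ²(X) f(X)], where X ∼ F. -/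
/-!
Put `g = f μ`, which lies in `L¹ ∩ L²` of Lebesgue measure because `F` is finite and `f` is
bounded. Translating the inner integral to the cube `[-h, h]^q` and applying Fubini,
`E[μ(X) Ω_μ(X, h)] = ∫_{[-h,h]^q} φ(u) du` with `φ(u) = ∫ g(x) g(x + u) dx` the autocorrelation
of `g`. Since `φ` is continuous, its averages over the cubes, of volume `(2h)^q`, tend to
`φ(0) = ∫ g² dx = E[μ(X)² f(X)]`.
-/

open MeasureTheory Metric Set Filter Topology
open scoped ENNReal

/-- In the sup-norm space `ι → ℝ`, `closedBall x h` is a cube, of volume `(2h)^n`. -/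
theorem ContinuousAt.tendsto_setIntegral_closedBall_div_pow {ι : Type*} [Fintype ι]
    {φ : (ι → ℝ) → ℝ} {x : ι → ℝ} (hφ : ContinuousAt φ x)
    (hφm : StronglyMeasurableAtFilter φ (𝓝 x)) :
    Tendsto (fun h : ℝ => (∫ u in closedBall x h, φ u) / h ^ Fintype.card ι)
      (𝓝[>] 0) (𝓝 (2 ^ Fintype.card ι * φ x)) := by
  set n := Fintype.card ι
  have hvol : (fun h => volume.real (closedBall x h)) =ᶠ[𝓝[>] 0] fun h => (2 * h) ^ n := by
    filter_upwards [self_mem_nhdsWithin] with h (hh : 0 < h)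
    rw [measureReal_def, Real.volume_pi_closedBall x hh.le, ENNReal.toReal_ofReal (by positivity)]
  have hlin := hφ.integral_sub_linear_isLittleO_ae hφm
    ((tendsto_closedBall_smallSets x).mono_left nhdsWithin_le_nhds) _ hvol
  have hdiv := (hlin.tendsto_div_nhds_zero.const_mul (2 ^ n)).add_const (2 ^ n * φ x)
  rw [mul_zero, zero_add] at hdiv
  refine hdiv.congr' ?_
  filter_upwards [self_mem_nhdsWithin] with h (hh : 0 < h)
  field_simp
  ring

namespace MeasureTheory

section Density

variable {α : Type*} [MeasurableSpace α] {ν : Measure α} {f : α → ℝ}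

theorem integral_withDensity_ofReal (hf : Measurable f) (hf₀ : ∀ x, 0 ≤ f x) (ψ : α → ℝ) :
    ∫ x, ψ x ∂ν.withDensity (fun x => ENNReal.ofReal (f x)) = ∫ x, f x * ψ x ∂ν := by
  rw [integral_withDensity_eq_integral_toReal_smul hf.ennreal_ofReal
    (.of_forall fun _ => ENNReal.ofReal_lt_top)]
  simp only [ENNReal.toReal_ofReal (hf₀ _), smul_eq_mul]

theorem integrable_withDensity_ofReal_iff (hf : Measurable f) (hf₀ : ∀ x, 0 ≤ f x)
    {ψ : α → ℝ} :
    Integrable ψ (ν.withDensity fun x => ENNReal.ofReal (f x)) ↔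
      Integrable (fun x => f x * ψ x) ν := by
  rw [integrable_withDensity_iff_integrable_smul' hf.ennreal_ofReal
    (.of_forall fun _ => ENNReal.ofReal_lt_top)]
  simp only [ENNReal.toReal_ofReal (hf₀ _), smul_eq_mul]

theorem AEStronglyMeasurable.mul_of_withDensity_ofReal (hf : Measurable f)
    (hf₀ : ∀ x, 0 ≤ f x) {ψ : α → ℝ}
    (hψ : AEStronglyMeasurable ψ (ν.withDensity fun x => ENNReal.ofReal (f x))) :
    AEStronglyMeasurable (fun x => f x * ψ x) ν := by
  have := (aestronglyMeasurable_withDensity_iff hf.real_toNNReal).1 hψ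
  simpa only [Real.coe_toNNReal _ (hf₀ _), smul_eq_mul] using this

theorem MemLp.mul_of_withDensity_ofReal (hf : Measurable f) (hf₀ : ∀ x, 0 ≤ f x) {C : ℝ}
    (hfC : ∀ x, f x ≤ C) {ψ : α → ℝ}
    (hψ : MemLp ψ 2 (ν.withDensity fun x => ENNReal.ofReal (f x))) :
    MemLp (fun x => f x * ψ x) 2 ν := by
  have hm := hψ.1.mul_of_withDensity_ofReal hf hf₀
  refine (memLp_two_iff_integrable_sq hm).2 ?_
  have hdom : Integrable (fun x => C * (f x * ψ x ^ 2)) ν :=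
    ((integrable_withDensity_ofReal_iff hf hf₀).1 hψ.integrable_sq).const_mul C
  refine hdom.mono' (hm.pow 2) (.of_forall fun x => ?_)
  rw [Real.norm_of_nonneg (sq_nonneg _), mul_pow, sq (f x), mul_assoc]
  exact mul_le_mul_of_nonneg_right (hfC x) (mul_nonneg (hf₀ x) (sq_nonneg _))

end Density

theorem setIntegral_closedBall_eq_setIntegral_closedBall_zero {G : Type*}
    [SeminormedAddCommGroup G] [MeasurableSpace G] [MeasurableAdd G]
    {μ : Measure G} [μ.IsAddLeftInvariant] (g : G → ℝ) (x : G) (r : ℝ) :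
    ∫ y in closedBall x r, g y ∂μ = ∫ u in closedBall 0 r, g (x + u) ∂μ := by
  rw [← (measurePreserving_add_left μ x).setIntegral_preimage_emb
    (measurableEmbedding_addLeft x), preimage_add_left_closedBall, neg_add_cancel]

section Autocorrelation

variable {G : Type*} [AddCommGroup G] [MeasurableSpace G] {μ : Measure G} {g : G → ℝ}

noncomputable def autocorrelation (μ : Measure G) (g : G → ℝ) (u : G) : ℝ :=
  ∫ x, g x * g (x + u) ∂μ

theorem autocorrelation_zero : autocorrelation μ g 0 = ∫ x, g x ^ 2 ∂μ := by
  simp only [autocorrelation, add_zero, sq]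

theorem integral_mul_setIntegral_add_eq_setIntegral_autocorrelation [MeasurableAdd₂ G]
    [SFinite μ] [μ.IsAddLeftInvariant] (hg : Integrable g μ) (s : Set G) :
    ∫ x, g x * ∫ u in s, g (x + u) ∂μ ∂μ = ∫ u in s, autocorrelation μ g u ∂μ := by
  have hprod : Integrable (fun p : G × G => g p.1 * g (p.1 + p.2)) (μ.prod μ) :=
    ((measurePreserving_prod_add μ μ).integrable_comp (hg.mul_prod hg).aestronglyMeasurable).2
      (hg.mul_prod hg)
  have hrestr : Integrable (fun p : G × G => g p.1 * g (p.1 + p.2)) (μ.prod (μ.restrict s)) := by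
    simpa only [← Measure.prod_restrict, Measure.restrict_univ] using
      hprod.restrict (s := univ ×ˢ s)
  simp_rw [← integral_const_mul]
  exact integral_integral_swap hrestr

/-- `autocorrelation μ g u` is the `L²` inner product of `g` with its translate by `u`, and
translation is continuous on `L²`. -/
theorem continuous_autocorrelation [TopologicalSpace G] [IsTopologicalAddGroup G] [BorelSpace G]
    [μ.IsAddLeftInvariant] [μ.InnerRegularCompactLTTop] [IsLocallyFiniteMeasure μ]
    (hg : MemLp g 2 μ) : Continuous (autocorrelation μ g) := by
  have : Fact ((1 : ℝ≥0∞) ≤ 2) := ⟨one_le_two⟩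
  let translate : G → C(G, G) := fun u => ⟨(· + u), continuous_add_const u⟩
  have htranslate : Continuous translate :=
    ContinuousMap.continuous_of_continuous_uncurry _ (continuous_snd.add continuous_fst)
  have hpres : ∀ u, MeasurePreserving (translate u) μ μ := measurePreserving_add_right μ
  have hinner : ∀ u, autocorrelation μ g u =
      inner ℝ (hg.toLp g) (Lp.compMeasurePreserving (translate u) (hpres u) (hg.toLp g)) := by
    intro u
    rw [L2.inner_def]
    refine integral_congr_ae ?_
    filter_upwards [hg.coeFn_toLp, Lp.coeFn_compMeasurePreserving (hg.toLp g) (hpres u),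
      (hpres u).quasiMeasurePreserving.ae_eq_comp hg.coeFn_toLp] with x h₁ h₂ h₃
    rw [h₂, h₃, h₁]
    simp [translate, mul_comm]
  rw [funext hinner]
  exact continuous_const.inner
    (continuous_const.compMeasurePreservingLp htranslate hpres ENNReal.ofNat_ne_top)

end Autocorrelation

end MeasureTheory

theorem stmt18_general (q : ℕ) (F : Measure (Fin q → ℝ)) [IsProbabilityMeasure F]
    (f : (Fin q → ℝ) → ℝ) (hf_meas : Measurable f) (hf_nonneg : ∀ x, 0 ≤ f x)
    (C : ℝ) (hf_bdd : ∀ x, f x ≤ C)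
    (hF : F = (volume : Measure (Fin q → ℝ)).withDensity (fun x => ENNReal.ofReal (f x)))
    (μ : (Fin q → ℝ) → ℝ) (hμ_L2 : MemLp μ 2 F) :
    Tendsto (fun h : ℝ =>
        (∫ x, μ x * (∫ y in Metric.closedBall x h, μ y ∂F) ∂F) / h ^ q)
      (𝓝[>] (0 : ℝ)) (𝓝 (2 ^ q * ∫ x, μ x ^ 2 * f x ∂F)) := by
  set g : (Fin q → ℝ) → ℝ := fun x => f x * μ x
  have hg₁ : Integrable g volume :=
    (integrable_withDensity_ofReal_iff hf_meas hf_nonneg).1 (hF ▸ hμ_L2.integrable one_le_two)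
  have hg₂ : MemLp g 2 volume := (hF ▸ hμ_L2).mul_of_withDensity_ofReal hf_meas hf_nonneg hf_bdd
  have hlhs : ∀ h, ∫ x, μ x * ∫ y in closedBall x h, μ y ∂F ∂F =
      ∫ u in closedBall 0 h, autocorrelation volume g u := by
    intro h
    simp_rw [hF, restrict_withDensity measurableSet_closedBall,
      integral_withDensity_ofReal hf_meas hf_nonneg,
      setIntegral_closedBall_eq_setIntegral_closedBall_zero (fun y => f y * μ y)]
    rw [← integral_mul_setIntegral_add_eq_setIntegral_autocorrelation hg₁]
    congr with x
    ring
  have hrhs : ∫ x, μ x ^ 2 * f x ∂F = autocorrelation volume g 0 := by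
    rw [hF, integral_withDensity_ofReal hf_meas hf_nonneg, autocorrelation_zero]
    congr with x
    ring
  have hcont := continuous_autocorrelation hg₂
  simpa only [hlhs, hrhs, Fintype.card_fin] using
    hcont.continuousAt.tendsto_setIntegral_closedBall_div_pow
      (hcont.stronglyMeasurableAtFilter _ _)

theorem stmt18 (q : ℕ) (F : Measure (Fin q → ℝ)) [IsProbabilityMeasure F]
    (f : (Fin q → ℝ) → ℝ) (hf_meas : Measurable f) (hf_nonneg : ∀ x, 0 ≤ f x)
    (C : ℝ) (hf_bdd : ∀ x, f x ≤ C)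
    (hF : F = (volume : Measure (Fin q → ℝ)).withDensity (fun x => ENNReal.ofReal (f x)))
    (μ : (Fin q → ℝ) → ℝ) (hμ_nonneg : ∀ x, 0 ≤ μ x) (hμ_L2 : MemLp μ 2 F) :
    Tendsto (fun h : ℝ =>
        (∫ x, μ x * (∫ y in Metric.closedBall x h, μ y ∂F) ∂F) / h ^ q)
      (𝓝[>] (0 : ℝ)) (𝓝 (2 ^ q * ∫ x, μ x ^ 2 * f x ∂F)) :=
  stmt18_general q F f hf_meas hf_nonneg C hf_bdd hF μ hμ_L2
end
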